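/- arXiv:2102.06202 — 7 statements merged into one kernel-verified Lean document; each statement's English description precedes it below -/
import Mathlib

section
/- Let (X_1,Y_1),…,(X_n,Y_n),(X,Y) be i.i.d. samples from a distribution on 𝒳×𝒴 and let S : 𝒳×𝒴 → (0,1] be a measurable score function; set s_i = S(X_i,Y_i). Fix ε > 0, α ∈ (0,1), γ ∈ (0,1), and set q̃ = (n+1)(1−α)/(n(1−γα)) + (2/(εn))·log(m/(γα)); assume 1/2 ≤ q̃ < 1. Let ŝ be the output of the private quantile mechanism applied to s_1,…,s_n with level q̃ and privacy parameter ε, drawn conditionally independently of (X,Y) given s_1,…,s_n. Then the prediction set C(x) = {y : S(x,y) ≤ ŝ} satisfies P(Y ∈ C(X)) = P(S(X,Y) ≤ ŝ) ≥ 1 − α, where the probability is over the calibration data, the mechanism's randomness, and (X,Y). -/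
open MeasureTheory ProbabilityTheory

/-- The weight assigned to bin edge `e j` by the private quantile mechanism run at
quantile level `q` on the (discretized) scores `d ∘ v`. -/
noncomputable def quantWeight {n : ℕ} (e : ℕ → ℝ) (d : ℝ → ℝ) (q : ℝ)
    (v : Fin n → ℝ) (j : ℕ) : ℝ :=
  max ((Set.ncard {i : Fin n | d (v i) < e j} : ℝ) / q)
      ((Set.ncard {i : Fin n | e j < d (v i)} : ℝ) / (1 - q))

/-- The probability that the private quantile mechanism (exponential mechanism with
privacy level `ε`) outputs the bin edge `e j`. -/
noncomputable def mechProb (m : ℕ) {n : ℕ} (e : ℕ → ℝ) (d : ℝ → ℝ) (q ε : ℝ)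
    (v : Fin n → ℝ) (j : ℕ) : ℝ :=
  Real.exp (-(ε / 2) * quantWeight e d q v j) /
    ∑ j' ∈ Finset.Icc 1 m, Real.exp (-(ε / 2) * quantWeight e d q v j')

/-!
Put `b = (2/ε) log (m/(γα))` and `c = n q̃ - (1 - q̃) b`.

The exponential mechanism gives weight at most `n` to an empirical `q̃`-quantile of the
discretized calibration scores, and weight at least `n + b` to every bin edge at or below
which at most `c` of them lie; so it outputs such an edge with probability at most
`exp (-ε b / 2) = γα/m`. If at most `c` calibration scores lie strictly below the test score
`x`, every edge below `x` is of this kind, and hence `x ≤ ŝ` with probability at least `1 - γα`.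

By exchangeability of the `n + 1` scores, fewer than `⌈c⌉` calibration scores lie strictly
below the test score with probability at least `⌈c⌉/(n+1) ≥ (1-α)/(1-γα)`, and the two
bounds multiply to `1 - α`.
-/

open Finset
open scoped ENNReal

section Rank

variable {ι α : Type*} [Fintype ι] [LinearOrder α]

def numBelow (x : ι → α) (i : ι) : ℕ := #{l | x l < x i}

lemma numBelow_comp_perm (x : ι → α) (σ : Equiv.Perm ι) (i : ι) :
    numBelow (x ∘ σ) i = numBelow x (σ i) :=
  card_equiv σ fun l => by simp

lemma card_le_numBelow_le (x : ι → α) (k : ℕ) :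
    #{i | k ≤ numBelow x i} ≤ Fintype.card ι - k := by
  classical
  set B : Finset ι := {i | k ≤ numBelow x i}
  obtain hB | hB := B.eq_empty_or_nonempty
  · simp [hB]
  obtain ⟨i₀, hi₀, hmin⟩ := B.exists_min_image x hB
  have hbelow : ({l | x l < x i₀} : Finset ι) ⊆ Bᶜ := fun l hl =>
    mem_compl.2 fun hlB => (mem_filter.1 hl).2.not_ge (hmin l hlB)
  have := (card_le_card hbelow).trans_eq (card_compl B)
  have hk : k ≤ numBelow x i₀ := (mem_filter.1 hi₀).2
  rw [numBelow] at hk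
  have := card_le_univ B
  omega

lemma card_castSucc_lt_le_numBelow_last {n : ℕ} (x : Fin (n + 1) → α) :
    #{i : Fin n | x i.castSucc < x (Fin.last n)} ≤ numBelow x (Fin.last n) :=
  card_le_card_of_injOn Fin.castSucc (fun i hi => by simpa using hi)
    (Fin.castSucc_injective n).injOn

lemma measurable_numBelow (i : ι) : Measurable fun x : ι → ℝ => numBelow x i := by
  simp_rw [numBelow, card_filter]
  exact Finset.measurable_sum _ fun l _ =>
    Measurable.ite (measurableSet_lt (measurable_pi_apply l) (measurable_pi_apply i))
      measurable_const measurable_const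

variable {Ω : Type*} [MeasurableSpace Ω] {μ : Measure Ω}

-- Both joint laws are the product of the common marginal law.
lemma identDistrib_comp_perm {β : Type*} [MeasurableSpace β] {T : ι → Ω → β}
    (hT : ∀ i, Measurable (T i)) (hind : iIndepFun T μ)
    (hid : ∀ i j, IdentDistrib (T i) (T j) μ μ) (σ : Equiv.Perm ι) :
    IdentDistrib (fun ω i => T (σ i) ω) (fun ω i => T i ω) μ μ where
  aemeasurable_fst := (measurable_pi_lambda _ fun i => hT (σ i)).aemeasurable
  aemeasurable_snd := (measurable_pi_lambda _ hT).aemeasurable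
  map_eq := by
    rw [(hind.precomp σ.injective).map_fun_eq_pi_map fun i => (hT _).aemeasurable,
      hind.map_fun_eq_pi_map fun i => (hT i).aemeasurable]
    exact congrArg Measure.pi (funext fun i => (hid _ _).map_eq)

variable {T : ι → Ω → ℝ}

lemma measurableSet_le_numBelow (hT : ∀ i, Measurable (T i)) (k : ℕ) (i : ι) :
    MeasurableSet {ω | k ≤ numBelow (T · ω) i} :=
  (measurable_numBelow i).comp (measurable_pi_lambda _ hT) measurableSet_Ici

lemma measure_le_numBelow_eq (hT : ∀ i, Measurable (T i)) (hind : iIndepFun T μ)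
    (hid : ∀ i j, IdentDistrib (T i) (T j) μ μ) (k : ℕ) (i j : ι) :
    μ {ω | k ≤ numBelow (T · ω) i} = μ {ω | k ≤ numBelow (T · ω) j} := by
  classical
  have hswap (ω : Ω) :
      numBelow (T · ω) i = numBelow (fun l => T (Equiv.swap j i l) ω) j :=
    (congrArg _ (Equiv.swap_apply_left j i)).symm.trans (numBelow_comp_perm _ _ j).symm
  simp_rw [hswap]
  exact (identDistrib_comp_perm hT hind hid (Equiv.swap j i)).measure_mem_eq
    (measurable_numBelow j measurableSet_Ici)

lemma card_mul_measure_le_numBelow_le (hT : ∀ i, Measurable (T i)) (hind : iIndepFun T μ)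
    (hid : ∀ i j, IdentDistrib (T i) (T j) μ μ) (k : ℕ) (i : ι) :
    Fintype.card ι * μ {ω | k ≤ numBelow (T · ω) i} ≤ (Fintype.card ι - k : ℕ) := by
  have := hind.isProbabilityMeasure
  calc (Fintype.card ι : ℝ≥0∞) * μ {ω | k ≤ numBelow (T · ω) i}
      = ∑ j, μ {ω | k ≤ numBelow (T · ω) j} := by
        simp [measure_le_numBelow_eq hT hind hid k _ i]
    _ = ∫⁻ ω, ∑ j, {ω | k ≤ numBelow (T · ω) j}.indicator 1 ω ∂μ := by
        rw [lintegral_finsetSum _ fun j _ =>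
          (measurable_one.indicator (measurableSet_le_numBelow hT k j))]
        simp [lintegral_indicator_one (measurableSet_le_numBelow hT k _)]
    _ ≤ ∫⁻ _, ((Fintype.card ι - k : ℕ) : ℝ≥0∞) ∂μ := by
        refine lintegral_mono fun ω => ?_
        simp only [Set.indicator_apply, Set.mem_ofPred_eq, Pi.one_apply]
        rw [sum_boole]
        exact_mod_cast card_le_numBelow_le (T · ω) k
    _ = (Fintype.card ι - k : ℕ) := by simp

lemma le_measureReal_numBelow_lt (hT : ∀ i, Measurable (T i)) (hind : iIndepFun T μ)
    (hid : ∀ i j, IdentDistrib (T i) (T j) μ μ) {k : ℕ} (hk : k ≤ Fintype.card ι) (i : ι) :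
    (k : ℝ) / Fintype.card ι ≤ μ.real {ω | numBelow (T · ω) i < k} := by
  have := hind.isProbabilityMeasure
  have hcard : (0 : ℝ) < Fintype.card ι := by exact_mod_cast Fintype.card_pos_iff.2 ⟨i⟩
  have h := ENNReal.toReal_mono (by simp) (card_mul_measure_le_numBelow_le hT hind hid k i)
  rw [ENNReal.toReal_mul, ENNReal.toReal_natCast, ENNReal.toReal_natCast,
    Nat.cast_sub hk] at h
  have hcompl : {ω | numBelow (T · ω) i < k} = {ω | k ≤ numBelow (T · ω) i}ᶜ := by
    ext; simp
  rw [hcompl, probReal_compl_eq_one_sub (measurableSet_le_numBelow hT k i),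
    div_le_iff₀ hcard]
  change _ * μ.real _ ≤ _ at h
  nlinarith

end Rank

lemma mul_measure_le_measure_prod {α β : Type*} [MeasurableSpace α] [MeasurableSpace β]
    (μ : Measure α) (ν : Measure β) [SFinite ν] {s : Set (α × β)} (hs : MeasurableSet s)
    {G : Set α} (hG : MeasurableSet G) {r : ℝ≥0∞} (h : ∀ a ∈ G, r ≤ ν (Prod.mk a ⁻¹' s)) :
    r * μ G ≤ μ.prod ν s := by
  rw [Measure.prod_apply hs, ← lintegral_indicator_const hG]
  refine lintegral_mono fun a => ?_
  by_cases ha : a ∈ G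
  · simpa [ha] using h a ha
  · simp [ha]

lemma mul_ofReal_le_measure_prod_le {Ω₁ Ω₂ : Type*} [MeasurableSpace Ω₁]
    [MeasurableSpace Ω₂] (μ : Measure Ω₁) (ν : Measure Ω₂) [SFinite ν] {n : ℕ}
    {T : Fin (n + 1) → Ω₁ → ℝ}
    (hT : ∀ i, Measurable (T i)) (hind : iIndepFun T μ)
    (hid : ∀ i j, IdentDistrib (T i) (T j) μ μ) {B : (Fin n → ℝ) → Ω₂ → ℝ}
    (hB : Measurable fun p : (Fin n → ℝ) × Ω₂ => B p.1 p.2) {k : ℕ} (hk : k ≤ n + 1)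
    {r : ℝ≥0∞} (h : ∀ ω, #{i : Fin n | T i.castSucc ω < T (Fin.last n) ω} < k →
      r ≤ ν {ω₂ | T (Fin.last n) ω ≤ B (fun i => T i.castSucc ω) ω₂}) :
    r * ENNReal.ofReal (k / (n + 1)) ≤
      μ.prod ν {ω | T (Fin.last n) ω.1 ≤ B (fun i => T i.castSucc ω.1) ω.2} := by
  have := hind.isProbabilityMeasure
  have hG := le_measureReal_numBelow_lt hT hind hid (by simpa using hk) (Fin.last n)
  rw [Fintype.card_fin, Nat.cast_succ] at hG
  calc r * ENNReal.ofReal (k / (n + 1))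
      ≤ r * μ {ω | numBelow (T · ω) (Fin.last n) < k} := by
        gcongr
        exact (ENNReal.ofReal_le_ofReal hG).trans_eq ofReal_measureReal
    _ ≤ _ := by
        refine mul_measure_le_measure_prod μ ν ?_
          ((measurable_numBelow _).comp (measurable_pi_lambda _ hT) measurableSet_Iio)
          fun ω hω => h ω ((card_castSucc_lt_le_numBelow_last _).trans_lt hω)
        exact measurableSet_le ((hT _).comp measurable_fst) (hB.comp
          ((measurable_pi_lambda _ fun i => (hT _).comp measurable_fst).prodMk measurable_snd))

lemma Real.exp_div_sum_exp_le {ι : Type*} {s : Finset ι} {j₀ : ι} (hj₀ : j₀ ∈ s)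
    (f : ι → ℝ) (j : ι) : Real.exp (f j) / ∑ j' ∈ s, Real.exp (f j') ≤ Real.exp (f j - f j₀) := by
  rw [div_le_iff₀ (sum_pos (fun _ _ => Real.exp_pos _) ⟨j₀, hj₀⟩)]
  calc Real.exp (f j) = Real.exp (f j - f j₀) * Real.exp (f j₀) := by
        rw [← Real.exp_add, sub_add_cancel]
    _ ≤ Real.exp (f j - f j₀) * ∑ j' ∈ s, Real.exp (f j') := by
      gcongr
      exact single_le_sum (f := fun j' => Real.exp (f j')) (fun _ _ => (Real.exp_pos _).le)
        hj₀

lemma card_lt_eq_card_sub_card_le {ι α : Type*} [Fintype ι] [LinearOrder α] (u : ι → α)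
    (x : α) : (#{i | x < u i} : ℝ) = Fintype.card ι - #{i | u i ≤ x} := by
  have h := card_filter_add_card_filter_not (s := univ) fun i => u i ≤ x
  simp only [not_le, card_univ] at h
  rw [eq_sub_iff_add_eq']
  exact_mod_cast h

lemma exists_mem_card_lt_le_card_gt_le {ι α : Type*} [Fintype ι] [LinearOrder α]
    (u : ι → α) {E : Finset α} (hE : E.Nonempty) (hu : ∀ i, u i ∈ E) {q : ℝ} (hq0 : 0 ≤ q)
    (hq1 : q ≤ 1) :
    ∃ x ∈ E, (#{i | u i < x} : ℝ) ≤ Fintype.card ι * q ∧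
      (#{i | x < u i} : ℝ) ≤ Fintype.card ι * (1 - q) := by
  set F := E.filter fun y => Fintype.card ι * q ≤ #{i | u i ≤ y}
  have hF : F.Nonempty := by
    refine ⟨E.max' hE, mem_filter.2 ⟨E.max'_mem hE, ?_⟩⟩
    rw [filter_true_of_mem fun i _ => E.le_max' _ (hu i), card_univ]
    nlinarith
  set x := F.min' hF
  obtain ⟨hxE, hxq⟩ := mem_filter.1 (F.min'_mem hF)
  refine ⟨x, hxE, ?_, ?_⟩
  · by_contra! hlt
    obtain ⟨i₀, hi₀, hmax⟩ := exists_max_image {i | u i < x} u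
      (card_pos.1 (by exact_mod_cast (mul_nonneg (Nat.cast_nonneg _) hq0).trans_lt hlt))
    have hi₀x : u i₀ < x := (mem_filter.1 hi₀).2
    have hcard : #{i | u i ≤ u i₀} = #{i | u i < x} :=
      congrArg card (filter_congr fun i _ =>
        ⟨fun h => h.trans_lt hi₀x, fun h => hmax i (mem_filter.2 ⟨mem_univ _, h⟩)⟩)
    have hi₀F : u i₀ ∈ F := mem_filter.2 ⟨hu i₀, by rw [hcard]; exact hlt.le⟩
    exact (F.min'_le _ hi₀F).not_gt hi₀x
  · rw [card_lt_eq_card_sub_card_le]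
    linarith

section Mechanism

variable {m n : ℕ} {e : ℕ → ℝ} {d : ℝ → ℝ} {q ε : ℝ} {v : Fin n → ℝ}

lemma quantWeight_eq (j : ℕ) : quantWeight e d q v j =
    max (#{i | d (v i) < e j} / q) (#{i | e j < d (v i)} / (1 - q)) := by
  simp [quantWeight, Set.ncard_eq_toFinset_card']

lemma exists_quantWeight_le (hm : 1 ≤ m) (hdv : ∀ i, ∃ j ∈ Icc 1 m, d (v i) = e j)
    (hq0 : 0 ≤ q) (hq1 : q ≤ 1) : ∃ j ∈ Icc 1 m, quantWeight e d q v j ≤ n := by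
  obtain ⟨x, hx, hlt, hgt⟩ := exists_mem_card_lt_le_card_gt_le (fun i => d (v i))
    (E := (Icc 1 m).image e) ⟨e m, mem_image_of_mem e (right_mem_Icc.2 hm)⟩
    (fun i => mem_image.2 ((hdv i).imp fun _ h => ⟨h.1, h.2.symm⟩)) hq0 hq1
  obtain ⟨j, hj, rfl⟩ := mem_image.1 hx
  rw [Fintype.card_fin] at hlt hgt
  exact ⟨j, hj, (quantWeight_eq j).trans_le <| max_le
    (div_le_of_le_mul₀ hq0 (Nat.cast_nonneg n) hlt)
    (div_le_of_le_mul₀ (sub_nonneg.2 hq1) (Nat.cast_nonneg n) hgt)⟩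

lemma mechProb_le_exp (hm : 1 ≤ m) (hdv : ∀ i, ∃ j ∈ Icc 1 m, d (v i) = e j) (hq0 : 0 ≤ q)
    (hq1 : q < 1) (hε : 0 ≤ ε) {b : ℝ} {j : ℕ}
    (hj : (#{i | d (v i) ≤ e j} : ℝ) ≤ n * q - (1 - q) * b) :
    mechProb m e d q ε v j ≤ Real.exp (-(ε / 2) * b) := by
  obtain ⟨j₀, hj₀, hw₀⟩ := exists_quantWeight_le hm hdv hq0 hq1.le
  have hw : n + b ≤ quantWeight e d q v j := by
    rw [quantWeight_eq]
    refine le_max_of_le_right ?_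
    rw [le_div_iff₀ (sub_pos.2 hq1), card_lt_eq_card_sub_card_le (fun i => d (v i)),
      Fintype.card_fin]
    nlinarith
  calc mechProb m e d q ε v j
      ≤ Real.exp (-(ε / 2) * quantWeight e d q v j - -(ε / 2) * quantWeight e d q v j₀) :=
        Real.exp_div_sum_exp_le hj₀ (fun j => -(ε / 2) * quantWeight e d q v j) j
    _ ≤ Real.exp (-(ε / 2) * b) := Real.exp_le_exp.2 (by nlinarith)

end Mechanism

lemma ofReal_sum_le_measure_le {ι Ω : Type*} [MeasurableSpace Ω] (ν : Measure Ω)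
    {s : Finset ι} {e : ι → ℝ} (he : Set.InjOn e s) {A : Ω → ℝ} (hA : Measurable A)
    {p : ι → ℝ} (hp0 : ∀ j ∈ s, 0 ≤ p j)
    (hp : ∀ j ∈ s, ν {ω | A ω = e j} = ENNReal.ofReal (p j)) (x : ℝ) :
    ENNReal.ofReal (∑ j ∈ s with x ≤ e j, p j) ≤ ν {ω | x ≤ A ω} := by
  have hdisj : Set.PairwiseDisjoint ↑(s.filter (x ≤ e ·)) fun j => {ω | A ω = e j} :=
    fun j hj j' hj' hne => Set.disjoint_left.2 fun ω (h : A ω = e j) (h' : A ω = e j') =>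
      hne (he (mem_filter.1 hj).1 (mem_filter.1 hj').1 (h.symm.trans h'))
  rw [ENNReal.ofReal_sum_of_nonneg fun j hj => hp0 j (mem_filter.1 hj).1,
    sum_congr rfl fun j hj => (hp j (mem_filter.1 hj).1).symm,
    ← measure_biUnion_finset hdisj fun j _ => hA (measurableSet_singleton _)]
  refine measure_mono (Set.iUnion₂_subset fun j hj ω (hω : A ω = e j) => ?_)
  exact (show x ≤ A ω from hω ▸ (mem_filter.1 hj).2)

lemma ofReal_one_sub_le_measure_le_of_mechProb {Ω : Type*} [MeasurableSpace Ω]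
    (ν : Measure Ω) {m n : ℕ} (hm : 1 ≤ m) {e : ℕ → ℝ} (he : Set.InjOn e (Icc 1 m))
    {d : ℝ → ℝ} {v : Fin n → ℝ} (hdv : ∀ i, ∃ j ∈ Icc 1 m, d (v i) = e j)
    (hvd : ∀ i, v i ≤ d (v i)) {q ε b : ℝ} (hq0 : 0 ≤ q) (hq1 : q < 1) (hε : 0 ≤ ε)
    {A : Ω → ℝ} (hAm : Measurable A)
    (hA : ∀ j ∈ Icc 1 m, ν {ω | A ω = e j} = ENNReal.ofReal (mechProb m e d q ε v j))
    {x : ℝ} (hx : (#{i | v i < x} : ℝ) ≤ n * q - (1 - q) * b) :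
    ENNReal.ofReal (1 - m * Real.exp (-(ε / 2) * b)) ≤ ν {ω | x ≤ A ω} := by
  have hp0 : ∀ j, 0 ≤ mechProb m e d q ε v j := fun j =>
    div_nonneg (Real.exp_pos _).le (sum_nonneg fun _ _ => (Real.exp_pos _).le)
  have hsum : ∑ j ∈ Icc 1 m, mechProb m e d q ε v j = 1 := by
    simp only [mechProb, ← sum_div]
    exact div_self (sum_pos (fun _ _ => Real.exp_pos _) ⟨m, right_mem_Icc.2 hm⟩).ne'
  have hlow : ∑ j ∈ Icc 1 m with ¬ x ≤ e j, mechProb m e d q ε v j ≤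
      m * Real.exp (-(ε / 2) * b) :=
    calc ∑ j ∈ Icc 1 m with ¬ x ≤ e j, mechProb m e d q ε v j
        ≤ #{j ∈ Icc 1 m | ¬ x ≤ e j} • Real.exp (-(ε / 2) * b) := by
          refine sum_le_card_nsmul _ _ _ fun j hj => ?_
          obtain ⟨hj, hjx⟩ := mem_filter.1 hj
          refine mechProb_le_exp hm hdv hq0 hq1 hε (le_trans ?_ hx)
          exact_mod_cast card_le_card <| monotone_filter_right _ fun i _ (hi : d (v i) ≤ e j) =>
            (hvd i).trans_lt (hi.trans_lt (not_le.1 hjx))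
      _ ≤ m * Real.exp (-(ε / 2) * b) := by
          rw [nsmul_eq_mul]
          gcongr
          exact_mod_cast (card_filter_le _ _).trans (Nat.card_Icc 1 m).le
  rw [← sum_filter_add_sum_filter_not _ (x ≤ e ·)] at hsum
  exact (ENNReal.ofReal_le_ofReal (by linarith)).trans
    (ofReal_sum_le_measure_le ν he hAm (fun j _ => hp0 j) hA x)

lemma exists_mem_Icc_mem_Ioc {α : Type*} [LinearOrder α] (e : ℕ → α) {m : ℕ} {s : α}
    (hs : s ∈ Set.Ioc (e 0) (e m)) : ∃ j ∈ Icc 1 m, s ∈ Set.Ioc (e (j - 1)) (e j) := by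
  have hex : ∃ j, s ≤ e j := ⟨m, hs.2⟩
  have hpos : 0 < Nat.find hex :=
    Nat.pos_of_ne_zero fun h => (h ▸ Nat.find_spec hex).not_gt hs.1
  exact ⟨Nat.find hex, mem_Icc.2 ⟨hpos, Nat.find_min' hex hs.2⟩,
    lt_of_not_ge (Nat.find_min hex (Nat.sub_lt hpos one_pos)), Nat.find_spec hex⟩

lemma exists_eq_and_le_of_mem_Ioc {e : ℕ → ℝ} {m : ℕ} {d : ℝ → ℝ}
    (hd : ∀ s : ℝ, ∀ j : ℕ, 1 ≤ j → j ≤ m → s ∈ Set.Ioc (e (j - 1)) (e j) → d s = e j)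
    {s : ℝ} (hs : s ∈ Set.Ioc (e 0) (e m)) : (∃ j ∈ Icc 1 m, d s = e j) ∧ s ≤ d s := by
  obtain ⟨j, hj, hsj⟩ := exists_mem_Icc_mem_Ioc e hs
  have hdj := hd s j (mem_Icc.1 hj).1 (mem_Icc.1 hj).2 hsj
  exact ⟨⟨j, hj, hdj⟩, hdj ▸ hsj.2⟩

lemma mul_exp_neg_mul_log_div {M r ε : ℝ} (hM : 0 < M) (hr : 0 < r) (hε : ε ≠ 0) :
    M * Real.exp (-(ε / 2) * (2 / ε * Real.log (M / r))) = r := by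
  rw [show -(ε / 2) * (2 / ε * Real.log (M / r)) = -Real.log (M / r) by field_simp,
    Real.exp_neg, Real.exp_log (by positivity)]
  field_simp

theorem private_conformal_coverage_lower_general
    {Ω₁ Ω₂ 𝒳 𝒴 : Type*} [MeasurableSpace Ω₁] [MeasurableSpace Ω₂]
    [MeasurableSpace 𝒳] [MeasurableSpace 𝒴]
    (μ : Measure Ω₁) (ν : Measure Ω₂) [IsProbabilityMeasure ν]
    (n m : ℕ) (hn : 1 ≤ n) (hm : 1 ≤ m)
    -- the i.i.d. data (X₁,Y₁),…,(Xₙ,Yₙ),(X,Y)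
    (data : Fin (n + 1) → Ω₁ → 𝒳 × 𝒴)
    (hdatameas : ∀ i, Measurable (data i))
    (hiid : iIndepFun data μ)
    (hident : ∀ i j, IdentDistrib (data i) (data j) μ μ)
    -- the measurable score function with values in (0,1]
    (S : 𝒳 × 𝒴 → ℝ) (hS : Measurable S) (hSrange : ∀ p, S p ∈ Set.Ioc (0 : ℝ) 1)
    -- the bin edges 0 = e₀ < e₁ < ⋯ < eₘ = 1 and the discretization map
    (e : ℕ → ℝ) (he0 : e 0 = 0) (hem : e m = 1) (hmono : ∀ j < m, e j < e (j + 1))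
    (d : ℝ → ℝ)
    (hd : ∀ s : ℝ, ∀ j : ℕ, 1 ≤ j → j ≤ m → s ∈ Set.Ioc (e (j - 1)) (e j) → d s = e j)
    -- parameters and the adjusted quantile level q̃
    (ε α γ : ℝ) (hε : 0 < ε) (hα : α ∈ Set.Ioo (0 : ℝ) 1) (hγ : γ ∈ Set.Ioo (0 : ℝ) 1)
    (tq : ℝ)
    (htq : tq = ((n : ℝ) + 1) * (1 - α) / (n * (1 - γ * α)) +
      2 / (ε * n) * Real.log (m / (γ * α)))
    (htq_half : 1 / 2 ≤ tq) (htq_one : tq < 1)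
    -- the private quantile mechanism: given a score vector, a random bin edge
    (A : (Fin n → ℝ) → Ω₂ → ℝ)
    (hAmeas : Measurable fun p : (Fin n → ℝ) × Ω₂ => A p.1 p.2)
    (hA : ∀ v : Fin n → ℝ, (∀ i, v i ∈ Set.Ioc (0 : ℝ) 1) →
      ∀ j, 1 ≤ j → j ≤ m →
        ν {ω₂ | A v ω₂ = e j} = ENNReal.ofReal (mechProb m e d tq ε v j)) :
    -- coverage: P(Y ∈ C(X)) = P(S(X,Y) ≤ ŝ) ≥ 1 - α
    ENNReal.ofReal (1 - α) ≤
      (μ.prod ν) {ω | S (data (Fin.last n) ω.1) ≤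
        A (fun i => S (data i.castSucc ω.1)) ω.2} := by
  obtain ⟨hα0, hα1⟩ := hα
  obtain ⟨hγ0, hγ1⟩ := hγ
  have hγα : γ * α < 1 := by nlinarith
  have hm0 : (1 : ℝ) ≤ m := by exact_mod_cast hm
  set b := 2 / ε * Real.log (m / (γ * α))
  set c := n * tq - (1 - tq) * b
  have hb : (m : ℝ) * Real.exp (-(ε / 2) * b) = γ * α :=
    mul_exp_neg_mul_log_div (by positivity) (by positivity) hε.ne'
  have hc : (n + 1) * (1 - α) / (1 - γ * α) ≤ c ∧ c ≤ n := by
    have hb0 : 0 ≤ b := mul_nonneg (by positivity)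
      (Real.log_nonneg (by rw [le_div_iff₀ (by positivity)]; nlinarith))
    have hntq : n * tq = (n + 1) * (1 - α) / (1 - γ * α) + b := by
      have : (n : ℝ) ≠ 0 := Nat.cast_ne_zero.2 (by omega)
      rw [htq]
      simp only [b]
      field_simp
    constructor <;> nlinarith
  have hbin p := exists_eq_and_le_of_mem_Ioc hd (he0 ▸ hem ▸ hSrange p)
  have he : Set.InjOn e (Icc 1 m) := fun i hi j hj =>
    (strictMonoOn_Iic_of_lt_succ hmono).injOn (mem_Icc.1 hi).2 (mem_Icc.1 hj).2
  calc ENNReal.ofReal (1 - α)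
      ≤ ENNReal.ofReal (1 - γ * α) * ENNReal.ofReal (⌈c⌉₊ / (n + 1)) := by
        rw [← ENNReal.ofReal_mul (by linarith)]
        refine ENNReal.ofReal_le_ofReal ?_
        have := (div_le_iff₀ (by linarith)).1 hc.1
        rw [← mul_div_assoc, le_div_iff₀ (by positivity)]
        nlinarith [Nat.le_ceil c]
    _ ≤ _ := mul_ofReal_le_measure_prod_le μ ν (fun l => (hS.comp (hdatameas l)))
        (hiid.comp (fun _ => S) fun _ => hS) (fun i j => (hident i j).comp hS) hAmeas
        ((Nat.ceil_le.2 hc.2).trans n.le_succ) fun ω hω => by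
          have := ofReal_one_sub_le_measure_le_of_mechProb ν hm he (fun i => (hbin _).1)
            (fun i => (hbin _).2) (by linarith) htq_one hε.le
            (hAmeas.comp (measurable_const.prodMk measurable_id))
            (fun j hj => hA _ (fun i => hSrange _) j (mem_Icc.1 hj).1 (mem_Icc.1 hj).2)
            (Nat.lt_ceil.1 hω).le
          rwa [hb] at this

/-- **Coverage guarantee of differentially private conformal prediction (lower bound).**
The model: `data 0, …, data (n-1)` are the calibration points, `data (Fin.last n)` is
the test point `(X, Y)`, all i.i.d.; the mechanism's internal randomness lives on a
second probability space `Ω₂` (so the mechanism output is conditionally independent of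
the test point given the calibration scores). -/
theorem private_conformal_coverage_lower
    {Ω₁ Ω₂ 𝒳 𝒴 : Type*} [MeasurableSpace Ω₁] [MeasurableSpace Ω₂]
    [MeasurableSpace 𝒳] [MeasurableSpace 𝒴]
    (μ : Measure Ω₁) (ν : Measure Ω₂) [IsProbabilityMeasure μ] [IsProbabilityMeasure ν]
    (n m : ℕ) (hn : 1 ≤ n) (hm : 1 ≤ m)
    -- the i.i.d. data (X₁,Y₁),…,(Xₙ,Yₙ),(X,Y)
    (data : Fin (n + 1) → Ω₁ → 𝒳 × 𝒴)
    (hdatameas : ∀ i, Measurable (data i))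
    (hiid : iIndepFun data μ)
    (hident : ∀ i j, IdentDistrib (data i) (data j) μ μ)
    -- the measurable score function with values in (0,1]
    (S : 𝒳 × 𝒴 → ℝ) (hS : Measurable S) (hSrange : ∀ p, S p ∈ Set.Ioc (0 : ℝ) 1)
    -- the bin edges 0 = e₀ < e₁ < ⋯ < eₘ = 1 and the discretization map
    (e : ℕ → ℝ) (he0 : e 0 = 0) (hem : e m = 1) (hmono : ∀ j < m, e j < e (j + 1))
    (d : ℝ → ℝ)
    (hd : ∀ s : ℝ, ∀ j : ℕ, 1 ≤ j → j ≤ m → s ∈ Set.Ioc (e (j - 1)) (e j) → d s = e j)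
    -- parameters and the adjusted quantile level q̃
    (ε α γ : ℝ) (hε : 0 < ε) (hα : α ∈ Set.Ioo (0 : ℝ) 1) (hγ : γ ∈ Set.Ioo (0 : ℝ) 1)
    (tq : ℝ)
    (htq : tq = ((n : ℝ) + 1) * (1 - α) / (n * (1 - γ * α)) +
      2 / (ε * n) * Real.log (m / (γ * α)))
    (htq_half : 1 / 2 ≤ tq) (htq_one : tq < 1)
    -- the private quantile mechanism: given a score vector, a random bin edge
    (A : (Fin n → ℝ) → Ω₂ → ℝ)
    (hAmeas : Measurable fun p : (Fin n → ℝ) × Ω₂ => A p.1 p.2)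
    (hA : ∀ v : Fin n → ℝ, (∀ i, v i ∈ Set.Ioc (0 : ℝ) 1) →
      ∀ j, 1 ≤ j → j ≤ m →
        ν {ω₂ | A v ω₂ = e j} = ENNReal.ofReal (mechProb m e d tq ε v j)) :
    -- coverage: P(Y ∈ C(X)) = P(S(X,Y) ≤ ŝ) ≥ 1 - α
    ENNReal.ofReal (1 - α) ≤
      (μ.prod ν) {ω | S (data (Fin.last n) ω.1) ≤
        A (fun i => S (data i.castSucc ω.1)) ω.2} :=
  private_conformal_coverage_lower_general μ ν n m hn hm data hdatameas hiid hident S hS hSrange e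
    he0 hem hmono d hd ε α γ hε hα hγ tq htq htq_half htq_one A hAmeas hA
end

section
/- Fix scores s_1,…,s_n ∈ (0,1], a quantile level q ∈ (0,1), a privacy parameter ε > 0, and m bins, and let ŝ be the output of the private quantile mechanism. Then for every δ ∈ (0,1), P( (1/n)·#{i : [s_i] < ŝ} ≤ q + 2·max{q/(1−q), 1}·log(m/δ)/(nε) ) ≥ 1 − δ, where the probability is over the randomness of the mechanism. -/
open MeasureTheory ProbabilityTheory

set_option maxHeartbeats 1000000 in
/-- **Accuracy of the private quantile mechanism (upper tail).**  With probability at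
least `1 - δ` over the mechanism's randomness, at most a
`q + 2·max{q/(1-q), 1}·log(m/δ)/(nε)` fraction of the discretized scores lie strictly
below the output `ŝ`. -/
theorem private_quantile_accuracy_upper
    {Ω : Type*} [MeasurableSpace Ω] (P : Measure Ω) [IsProbabilityMeasure P]
    (n m : ℕ) (hn : 1 ≤ n) (hm : 1 ≤ m)
    (e : ℕ → ℝ) (he0 : e 0 = 0) (hem : e m = 1) (hmono : ∀ j < m, e j < e (j + 1))
    (d : ℝ → ℝ)
    (hd : ∀ s : ℝ, ∀ j : ℕ, 1 ≤ j → j ≤ m → s ∈ Set.Ioc (e (j - 1)) (e j) → d s = e j)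
    (s : Fin n → ℝ) (hs : ∀ i, s i ∈ Set.Ioc (0 : ℝ) 1)
    (q ε : ℝ) (hq : q ∈ Set.Ioo (0 : ℝ) 1) (hε : 0 < ε)
    (shat : Ω → ℝ) (hshatmeas : Measurable shat)
    (hdist : ∀ j, 1 ≤ j → j ≤ m →
      P {ω | shat ω = e j} = ENNReal.ofReal (mechProb m e d q ε s j))
    (δ : ℝ) (hδ : δ ∈ Set.Ioo (0 : ℝ) 1) :
    1 - ENNReal.ofReal δ ≤
      P {ω | (Set.ncard {i : Fin n | d (s i) < shat ω} : ℝ) / n ≤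
        q + 2 * max (q / (1 - q)) 1 * Real.log (m / δ) / (n * ε)} := by
  classical
  obtain ⟨hq0, hq1⟩ := hq
  obtain ⟨hδ0, hδ1⟩ := hδ
  have hn0 : (0:ℝ) < n := by exact_mod_cast Nat.pos_of_ne_zero (by omega)
  have hm0 : (0:ℝ) < m := by exact_mod_cast Nat.pos_of_ne_zero (by omega)
  have hq1' : (0:ℝ) < 1 - q := by linarith
  -- strict monotonicity of edges
  have estrict : ∀ k : ℕ, k ≤ m → ∀ j : ℕ, j < k → e j < e k := by
    intro k
    induction k with
    | zero => intro _ j hj; omega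
    | succ k ih =>
      intro hk j hj
      rcases Nat.lt_succ_iff_lt_or_eq.mp hj with h | h
      · exact (ih (by omega) j h).trans (hmono k (by omega))
      · subst h; exact hmono j (by omega)
  have eLe : ∀ j k : ℕ, j ≤ k → k ≤ m → e j ≤ e k := by
    intro j k h hk
    rcases h.lt_or_eq with h' | h'
    · exact (estrict k hk j h').le
    · rw [h']
  -- each discretized score is some edge
  have hdval : ∀ i, ∃ j, 1 ≤ j ∧ j ≤ m ∧ d (s i) = e j := by
    intro i
    have hex : ∃ j, s i ≤ e j := ⟨m, by rw [hem]; exact (hs i).2⟩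
    set j := Nat.find hex with hjdef
    have hj : s i ≤ e j := Nat.find_spec hex
    have hjm : j ≤ m := Nat.find_min' hex (by rw [hem]; exact (hs i).2)
    have hj1 : 1 ≤ j := by
      rcases Nat.eq_zero_or_pos j with h | h
      · exfalso
        have := hj
        rw [h, he0] at this
        exact absurd this (not_le.mpr (hs i).1)
      · exact h
    have hlt : e (j - 1) < s i := by
      have := Nat.find_min hex (show j - 1 < j by omega)
      exact lt_of_not_ge this
    exact ⟨j, hj1, hjm, hd (s i) j hj1 hjm ⟨hlt, hj⟩⟩
  -- abbreviations
  set A : ℕ → ℝ := fun j => ((Set.ncard {i : Fin n | d (s i) < e j}) : ℝ) with hAdef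
  set B : ℕ → ℝ := fun j => ((Set.ncard {i : Fin n | e j < d (s i)}) : ℝ) with hBdef
  have hAnonneg : ∀ j, 0 ≤ A j := fun j => by positivity
  have hA1 : A 1 = 0 := by
    have : {i : Fin n | d (s i) < e 1} = ∅ := by
      ext i
      simp only [Set.mem_setOf_eq, Set.mem_empty_iff_false, iff_false, not_lt]
      obtain ⟨k, hk1, hkm, hdk⟩ := hdval i
      rw [hdk]; exact eLe 1 k hk1 hkm
    simp [hAdef, this]
  have hBm : B m = 0 := by
    have : {i : Fin n | e m < d (s i)} = ∅ := by
      ext i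
      simp only [Set.mem_setOf_eq, Set.mem_empty_iff_false, iff_false, not_lt]
      obtain ⟨k, hk1, hkm, hdk⟩ := hdval i
      rw [hdk]; exact eLe k m hkm le_rfl
    simp [hBdef, this]
  -- the minimizing index jstar
  set S : Finset ℕ := (Finset.Icc 1 m).filter (fun j => A j ≤ q * n) with hSdef
  have h1S : 1 ∈ S := by
    rw [hSdef, Finset.mem_filter, Finset.mem_Icc, hA1]
    exact ⟨⟨le_rfl, hm⟩, by positivity⟩
  set jstar : ℕ := S.max' ⟨1, h1S⟩ with hjstardef
  have hjS : jstar ∈ S := Finset.max'_mem _ _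
  rw [hSdef, Finset.mem_filter, Finset.mem_Icc] at hjS
  obtain ⟨⟨hjs1, hjsm⟩, hAjs⟩ := hjS
  have hBjs : B jstar ≤ (1 - q) * n := by
    by_cases h : jstar = m
    · rw [h, hBm]; positivity
    · have hjm' : jstar + 1 ≤ m := by omega
      have hnot : jstar + 1 ∉ S := by
        intro hmem
        have := Finset.le_max' S _ hmem
        omega
      have hgt : q * n < A (jstar + 1) := by
        by_contra hle
        push_neg at hle
        exact hnot (by rw [hSdef, Finset.mem_filter, Finset.mem_Icc]; exact ⟨⟨by omega, hjm'⟩, hle⟩)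
      have hcompl : {i : Fin n | e jstar < d (s i)} = {i : Fin n | d (s i) < e (jstar + 1)}ᶜ := by
        ext i
        obtain ⟨k, hk1, hkm, hdk⟩ := hdval i
        simp only [Set.mem_setOf_eq, Set.mem_compl_iff, not_lt, hdk]
        constructor
        · intro h'
          have hjk : jstar < k := by
            by_contra hc
            push_neg at hc
            exact absurd (eLe k jstar hc hjsm) (not_le.mpr h')
          exact eLe (jstar + 1) k (by omega) hkm
        · intro h'
          exact lt_of_lt_of_le (hmono jstar (by omega)) h'
      have hcard : {i : Fin n | d (s i) < e (jstar + 1)}.ncard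
          + ({i : Fin n | d (s i) < e (jstar + 1)}ᶜ).ncard = n := by
        rw [Set.ncard_add_ncard_compl]
        simp [Nat.card_eq_fintype_card]
      have hBeq : B jstar = (n : ℝ) - A (jstar + 1) := by
        rw [hBdef, hAdef]
        simp only
        rw [hcompl]
        have := hcard
        push_cast [← this]
        ring
      rw [hBeq]
      linarith
  have hwstar : quantWeight e d q s jstar ≤ (n : ℝ) := by
    rw [quantWeight]
    apply max_le
    · rw [div_le_iff₀ hq0]; linarith [hAjs]
    · rw [div_le_iff₀ hq1']; linarith [hBjs]
  -- positivity of the normalizer and lower bound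
  set Z : ℝ := ∑ j' ∈ Finset.Icc 1 m, Real.exp (-(ε / 2) * quantWeight e d q s j') with hZdef
  have hZpos : 0 < Z := by
    apply Finset.sum_pos (fun j _ => Real.exp_pos _)
    exact ⟨1, Finset.mem_Icc.mpr ⟨le_rfl, hm⟩⟩
  have hZge : Real.exp (-(ε / 2) * n) ≤ Z := by
    have h1 : Real.exp (-(ε / 2) * n) ≤ Real.exp (-(ε / 2) * quantWeight e d q s jstar) := by
      apply Real.exp_le_exp.mpr
      have : -(ε / 2) ≤ 0 := by linarith
      exact mul_le_mul_of_nonpos_left hwstar this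
    refine h1.trans ?_
    rw [hZdef]
    exact Finset.single_le_sum (f := fun j' => Real.exp (-(ε / 2) * quantWeight e d q s j'))
      (fun j _ => (Real.exp_pos _).le) (Finset.mem_Icc.mpr ⟨hjs1, hjsm⟩)
  set L : ℝ := Real.log ((m : ℝ) / δ) with hLdef
  have hm1 : (1:ℝ) ≤ m := by exact_mod_cast hm
  have hL0 : 0 ≤ L := Real.log_nonneg (by rw [le_div_iff₀ hδ0]; linarith)
  set M : ℝ := max (q / (1 - q)) 1 with hMdef
  have hM1 : (1:ℝ) ≤ M := le_max_right _ _
  set c : ℝ := q + 2 * M * L / (n * ε) with hcdef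
  -- bound on the probability of each bad bin
  set Bad : Finset ℕ := (Finset.Icc 1 m).filter (fun j => ¬ (A j / n ≤ c)) with hBaddef
  have hbad : ∀ j ∈ Bad, mechProb m e d q ε s j ≤ δ / m := by
    intro j hj
    rw [hBaddef, Finset.mem_filter] at hj
    obtain ⟨hjIcc, hjgt⟩ := hj
    push_neg at hjgt
    have hAgt : c * n < A j := by
      rw [lt_div_iff₀ hn0] at hjgt; linarith
    have hwj : (n : ℝ) + 2 * L / ε ≤ quantWeight e d q s j := by
      have h1 : A j / q ≤ quantWeight e d q s j := le_max_left _ _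
      refine le_trans ?_ h1
      rw [le_div_iff₀ hq0]
      have hcn : c * n = q * n + 2 * M * L / ε := by
        rw [hcdef]; field_simp
      have hqM : q ≤ M := le_trans hq1.le hM1
      have hq' : q * (2 * L / ε) ≤ 2 * M * L / ε := by
        calc q * (2 * L / ε) ≤ M * (2 * L / ε) :=
              mul_le_mul_of_nonneg_right hqM (by positivity)
          _ = 2 * M * L / ε := by ring
      have hAgt2 : q * (n:ℝ) + 2 * M * L / ε < A j := by rw [hcn] at hAgt; exact hAgt
      nlinarith [hq', hAgt2]
    rw [mechProb]
    have hnum : Real.exp (-(ε / 2) * quantWeight e d q s j)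
        ≤ Real.exp (-(ε / 2) * ((n : ℝ) + 2 * L / ε)) := by
      apply Real.exp_le_exp.mpr
      exact mul_le_mul_of_nonpos_left hwj (by linarith)
    calc Real.exp (-(ε / 2) * quantWeight e d q s j) / Z
        ≤ Real.exp (-(ε / 2) * ((n : ℝ) + 2 * L / ε)) / Real.exp (-(ε / 2) * n) := by
          exact div_le_div₀ (Real.exp_pos _).le hnum (Real.exp_pos _) hZge
      _ = Real.exp (-L) := by
          rw [← Real.exp_sub]
          congr 1
          field_simp
          ring
      _ = δ / m := by
          rw [Real.exp_neg, hLdef, Real.exp_log (by positivity), inv_div]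
  -- measurability of the target event and of the bin events
  -- measurability
  have hfmono : Monotone (fun x : ℝ => ((Set.ncard {i : Fin n | d (s i) < x}) : ℝ) / n) := by
    intro x y hxy
    have hsub : {i : Fin n | d (s i) < x} ⊆ {i : Fin n | d (s i) < y} :=
      fun i hi => lt_of_lt_of_le hi hxy
    have h' : ((Set.ncard {i : Fin n | d (s i) < x}) : ℝ)
        ≤ ((Set.ncard {i : Fin n | d (s i) < y}) : ℝ) := by
      exact_mod_cast Set.ncard_le_ncard hsub (Set.toFinite _)
    exact div_le_div_of_nonneg_right h' hn0.le
  set E : Set Ω := {ω | ((Set.ncard {i : Fin n | d (s i) < shat ω}) : ℝ) / n ≤ c} with hEdef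
  have hE : MeasurableSet E :=
    measurableSet_le (hfmono.measurable.comp hshatmeas) measurable_const
  have hmeasj : ∀ j : ℕ, MeasurableSet {ω | shat ω = e j} := fun j =>
    hshatmeas (measurableSet_singleton (e j))
  -- the union of bin events has probability one
  set U : Set Ω := ⋃ j ∈ Finset.Icc 1 m, {ω | shat ω = e j} with hUdef
  have hUmeas : MeasurableSet U :=
    MeasurableSet.biUnion (Finset.Icc 1 m).countable_toSet (fun j _ => hmeasj j)
  have hdisj : (↑(Finset.Icc 1 m) : Set ℕ).PairwiseDisjoint
      (fun j => {ω | shat ω = e j}) := by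
    intro a ha b hb hab
    simp only [Finset.coe_Icc, Set.mem_Icc] at ha hb
    refine Set.disjoint_left.mpr fun ω hωa hωb => ?_
    have : e a = e b := by
      simp only [Set.mem_setOf_eq] at hωa hωb
      rw [← hωa, hωb]
    rcases lt_or_gt_of_ne hab with h | h
    · exact absurd this (ne_of_lt (estrict b hb.2 a h))
    · exact absurd this (ne_of_gt (estrict a ha.2 b h))
  have hsumP : ∑ j ∈ Finset.Icc 1 m, P {ω | shat ω = e j} = 1 := by
    have h1 : ∀ j ∈ Finset.Icc 1 m, P {ω | shat ω = e j}
        = ENNReal.ofReal (mechProb m e d q ε s j) := by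
      intro j hj
      rw [Finset.mem_Icc] at hj
      exact hdist j hj.1 hj.2
    have hnn : ∀ j ∈ Finset.Icc 1 m, 0 ≤ mechProb m e d q ε s j := by
      intro j _
      unfold mechProb
      positivity
    have h2 : ∑ j ∈ Finset.Icc 1 m, mechProb m e d q ε s j = 1 := by
      simp only [mechProb]
      rw [← Finset.sum_div, div_self (ne_of_gt hZpos)]
    rw [Finset.sum_congr rfl h1, ← ENNReal.ofReal_sum_of_nonneg hnn, h2, ENNReal.ofReal_one]
  have hU1 : P U = 1 := by
    rw [hUdef, measure_biUnion_finset hdisj (fun j _ => hmeasj j), hsumP]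
  have hUc : P Uᶜ = 0 := by
    rw [measure_compl hUmeas (measure_ne_top _ _), measure_univ, hU1, tsub_self]
  -- the complement of the target event is contained in bad bins
  have hsub : Eᶜ ⊆ Uᶜ ∪ ⋃ j ∈ Bad, {ω | shat ω = e j} := by
    intro ω hω
    by_cases hωU : ω ∈ U
    · right
      rw [hUdef] at hωU
      simp only [Set.mem_iUnion, Set.mem_setOf_eq] at hωU
      obtain ⟨j, hjIcc, hωj⟩ := hωU
      simp only [Set.mem_iUnion, Set.mem_setOf_eq]
      refine ⟨j, ?_, hωj⟩
      rw [hBaddef, Finset.mem_filter]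
      refine ⟨hjIcc, ?_⟩
      intro hle
      apply hω
      rw [hEdef]
      simp only [Set.mem_setOf_eq, hωj]
      exact hle
    · exact Or.inl hωU
  -- putting it together
  have hPEc : P Eᶜ ≤ ENNReal.ofReal δ := by
    calc P Eᶜ ≤ P (Uᶜ ∪ ⋃ j ∈ Bad, {ω | shat ω = e j}) := measure_mono hsub
      _ ≤ P Uᶜ + P (⋃ j ∈ Bad, {ω | shat ω = e j}) := measure_union_le _ _
      _ = P (⋃ j ∈ Bad, {ω | shat ω = e j}) := by rw [hUc, zero_add]
      _ ≤ ∑ j ∈ Bad, P {ω | shat ω = e j} := measure_biUnion_finset_le _ _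
      _ ≤ ∑ j ∈ Bad, ENNReal.ofReal (δ / m) := by
          apply Finset.sum_le_sum
          intro j hj
          have hjIcc : j ∈ Finset.Icc 1 m := by
            rw [hBaddef, Finset.mem_filter] at hj; exact hj.1
          rw [Finset.mem_Icc] at hjIcc
          rw [hdist j hjIcc.1 hjIcc.2]
          exact ENNReal.ofReal_le_ofReal (hbad j hj)
      _ = (Bad.card : ENNReal) * ENNReal.ofReal (δ / m) := by
          rw [Finset.sum_const, nsmul_eq_mul]
      _ ≤ (m : ENNReal) * ENNReal.ofReal (δ / m) := by
          apply mul_le_mul_left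
          have hcard : Bad.card ≤ m := by
            rw [hBaddef]
            exact le_trans (Finset.card_filter_le _ _) (by simp [Nat.card_Icc])
          exact_mod_cast hcard
      _ = ENNReal.ofReal δ := by
          rw [← ENNReal.ofReal_natCast m, ← ENNReal.ofReal_mul (by positivity)]
          congr 1
          field_simp
  have hPE : P E = 1 - P Eᶜ := by
    rw [measure_compl hE (measure_ne_top _ _), measure_univ,
      ENNReal.sub_sub_cancel ENNReal.one_ne_top prob_le_one]
  calc (1 : ENNReal) - ENNReal.ofReal δ ≤ 1 - P Eᶜ := tsub_le_tsub_left hPEc 1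
    _ = P E := hPE.symm
end

section
/- Let F be the cumulative distribution function of a probability distribution supported on a finite set {a_1,…,a_m} ⊂ ℝ, let Z_1,…,Z_n be i.i.d. with CDF F, and let F̂ be their empirical CDF. Then for every q ∈ (0,1], the random variable F(F̂⁻¹(q)) stochastically dominates the Beta(⌈nq⌉, n−⌈nq⌉+1) distribution: for every t ∈ ℝ, P( F(F̂⁻¹(q)) ≤ t ) ≤ P( Z_Beta ≤ t ), where Z_Beta ∼ Beta(⌈nq⌉, n−⌈nq⌉+1). -/
/-! With `k = ⌈nq⌉`, the empirical quantile `F̂⁻¹(q)` is the `k`-th smallest sample, so for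
monotone `F` the event `F(F̂⁻¹(q)) ≤ t` says that at least `k` samples satisfy `F(Z_i) ≤ t`.
These are independent events of common probability `p`, so the event has probability
`∑_{j ≥ k} C(n,j) p^j (1-p)^(n-j)`; differentiating in `p`, this sum telescopes to the
`Beta(k, n-k+1)` density, so it is the Beta CDF at `p`. Finally `p ≤ t`: as `Z` takes finitely
many values, `p = F(z₀)` for the largest atom `z₀` with `F(z₀) ≤ t`. -/

open MeasureTheory ProbabilityTheory

/-- The CDF of the `Beta(k, n - k + 1)` distribution (for `1 ≤ k ≤ n`), whose density
on `[0,1]` is proportional to `x^(k-1)·(1-x)^(n-k)`. -/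
noncomputable def betaCDF (k n : ℕ) (t : ℝ) : ℝ :=
  (∫ x in Set.Icc (0 : ℝ) 1 ∩ Set.Iic t, x ^ (k - 1) * (1 - x) ^ (n - k)) /
    ∫ x in Set.Icc (0 : ℝ) 1, x ^ (k - 1) * (1 - x) ^ (n - k)

/-- The empirical quantile `F̂⁻¹(q) = inf{z : F̂(z) ≥ q}`, where `F̂` is the empirical
CDF of the tuple `x`. -/
noncomputable def empQuantile {n : ℕ} (x : Fin n → ℝ) (q : ℝ) : ℝ :=
  sInf {z : ℝ | q ≤ (Set.ncard {i : Fin n | x i ≤ z} : ℝ) / n}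

open Finset

section OrderStatistic

variable {ι : Type*} [Fintype ι] (x : ι → ℝ)

lemma isClosed_setOf_le_card_le (k : ℕ) : IsClosed {z : ℝ | k ≤ #{i | x i ≤ z}} := by
  have hunion : {z : ℝ | k ≤ #{i | x i ≤ z}} =
      ⋃ S ∈ {S : Finset ι | k ≤ #S}, ⋂ i ∈ S, Set.Ici (x i) := by
    ext z
    simp only [Set.mem_ofPred_eq, Set.mem_iUnion, Set.mem_iInter, Set.mem_Ici, exists_prop]
    refine ⟨fun h => ⟨_, h, fun i hi => (mem_filter.1 hi).2⟩, fun ⟨S, hS, hSz⟩ => ?_⟩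
    exact hS.trans (card_le_card fun i hi => mem_filter.2 ⟨mem_univ i, hSz i hi⟩)
  rw [hunion]
  exact (Set.toFinite _).isClosed_biUnion fun S _ => isClosed_biInter fun i _ => isClosed_Ici

lemma bddBelow_setOf_le_card_le {k : ℕ} (hk : 0 < k) :
    BddBelow {z : ℝ | k ≤ #{i | x i ≤ z}} := by
  obtain ⟨m, hm⟩ := (Set.finite_range x).bddBelow
  refine ⟨m, fun z hz => ?_⟩
  obtain ⟨i, hi⟩ := card_pos.1 (hk.trans_le hz)
  exact (hm ⟨i, rfl⟩).trans (mem_filter.1 hi).2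

lemma nonempty_setOf_le_card_le {k : ℕ} (hk : k ≤ Fintype.card ι) :
    {z : ℝ | k ≤ #{i | x i ≤ z}}.Nonempty := by
  obtain ⟨M, hM⟩ := (Set.finite_range x).bddAbove
  refine ⟨M, ?_⟩
  simpa [filter_true_of_mem fun i _ => hM ⟨i, rfl⟩] using hk

lemma csInf_mem_setOf_le_card_le {k : ℕ} (hk : 0 < k) (hkn : k ≤ Fintype.card ι) :
    k ≤ #{i | x i ≤ sInf {z : ℝ | k ≤ #{i | x i ≤ z}}} :=
  (isClosed_setOf_le_card_le x k).csInf_mem (nonempty_setOf_le_card_le x hkn)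
    (bddBelow_setOf_le_card_le x hk)

theorem apply_sInf_setOf_le_card_le_iff {k : ℕ} (hk : 0 < k) (hkn : k ≤ Fintype.card ι)
    {F : ℝ → ℝ} (hF : Monotone F) (t : ℝ) :
    F (sInf {z : ℝ | k ≤ #{i | x i ≤ z}}) ≤ t ↔ k ≤ #{i | F (x i) ≤ t} := by
  constructor
  · intro h
    refine (csInf_mem_setOf_le_card_le x hk hkn).trans (card_le_card fun i hi => ?_)
    simp only [mem_filter, mem_univ, true_and] at hi ⊢
    exact (hF hi).trans h
  · intro h
    obtain ⟨j, hj, hjmax⟩ := exists_max_image {i | F (x i) ≤ t} x (card_pos.1 (hk.trans_le h))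
    have hjmem : k ≤ #{i | x i ≤ x j} := h.trans (card_le_card fun i hi => by
      simp only [mem_filter, mem_univ, true_and] at hi ⊢
      exact hjmax i (by simpa using hi))
    exact (hF (csInf_le (bddBelow_setOf_le_card_le x hk) hjmem)).trans (mem_filter.1 hj).2

end OrderStatistic

lemma empQuantile_eq_sInf {n : ℕ} (hn : 0 < n) (x : Fin n → ℝ) (q : ℝ) :
    empQuantile x q = sInf {z : ℝ | ⌈n * q⌉₊ ≤ #{i | x i ≤ z}} := by
  have hn' : (0 : ℝ) < n := Nat.cast_pos.2 hn
  unfold empQuantile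
  congr 1
  ext z
  rw [Set.mem_ofPred_eq, Set.mem_ofPred_eq, le_div_iff₀ hn', Nat.ceil_le, mul_comm,
    Set.ncard_eq_toFinset_card', Set.toFinset_ofPred]

noncomputable def binomialTail (n k : ℕ) (p : ℝ) : ℝ :=
  ∑ j ∈ Icc k n, n.choose j * p ^ j * (1 - p) ^ (n - j)

-- The second term is written as the first at `j + 1`, so that the sum over `j` telescopes.
lemma hasDerivAt_choose_mul_pow_mul_pow (n j : ℕ) (p : ℝ) :
    HasDerivAt (fun p : ℝ => n.choose j * p ^ j * (1 - p) ^ (n - j))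
      (j * n.choose j * p ^ (j - 1) * (1 - p) ^ (n - j)
        - (j + 1 : ℕ) * n.choose (j + 1) * p ^ (j + 1 - 1) * (1 - p) ^ (n - (j + 1))) p := by
  refine (((hasDerivAt_pow j p).const_mul (n.choose j : ℝ)).mul
    (((hasDerivAt_id' p).const_sub 1).pow (n - j))).congr_deriv ?_
  have hcoef : ((j + 1 : ℕ) : ℝ) * n.choose (j + 1) = n.choose j * (n - j : ℕ) := by
    exact_mod_cast (mul_comm _ _).trans (Nat.choose_succ_right_eq n j)
  rw [hcoef, Nat.add_sub_cancel, Nat.sub_add_eq, Pi.pow_apply]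
  ring

lemma hasDerivAt_binomialTail {n k : ℕ} (hkn : k ≤ n) (p : ℝ) :
    HasDerivAt (binomialTail n k) (k * n.choose k * (p ^ (k - 1) * (1 - p) ^ (n - k))) p := by
  refine (HasDerivAt.fun_sum (u := Icc k n) fun j _ =>
    hasDerivAt_choose_mul_pow_mul_pow n j p).congr_deriv ?_
  rw [sum_sub_distrib, ← neg_sub, ← sum_sub_distrib,
    sum_Icc_sub hkn (fun j : ℕ => (j : ℝ) * n.choose j * p ^ (j - 1) * (1 - p) ^ (n - j))]
  simp [Nat.choose_succ_self]
  ring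

lemma binomialTail_eq_integral {n k : ℕ} (hk : 0 < k) (hkn : k ≤ n) (p : ℝ) :
    binomialTail n k p = k * n.choose k * ∫ x in 0..p, x ^ (k - 1) * (1 - x) ^ (n - k) := by
  have hzero : binomialTail n k 0 = 0 :=
    sum_eq_zero fun j hj => by simp [(hk.trans_le (mem_Icc.1 hj).1).ne']
  rw [← intervalIntegral.integral_const_mul, intervalIntegral.integral_eq_sub_of_hasDerivAt
    (fun x _ => hasDerivAt_binomialTail hkn x)
    ((by fun_prop : Continuous _).intervalIntegrable _ _),
    hzero, sub_zero]

lemma binomialTail_one {n k : ℕ} (hkn : k ≤ n) : binomialTail n k 1 = 1 := by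
  rw [binomialTail, sum_eq_single_of_mem n (mem_Icc.2 ⟨hkn, le_rfl⟩)]
  · simp
  · intro j hj hjn
    simp [Nat.sub_ne_zero_of_lt (lt_of_le_of_ne (mem_Icc.1 hj).2 hjn)]

lemma binomialTail_eq_div {n k : ℕ} (hk : 0 < k) (hkn : k ≤ n) {p : ℝ} (hp : 0 ≤ p) :
    binomialTail n k p = (∫ x in Set.Icc 0 p, x ^ (k - 1) * (1 - x) ^ (n - k)) /
      ∫ x in Set.Icc (0 : ℝ) 1, x ^ (k - 1) * (1 - x) ^ (n - k) := by
  have h1 := binomialTail_eq_integral hk hkn 1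
  rw [binomialTail_one hkn] at h1
  rw [integral_Icc_eq_integral_Ioc, integral_Icc_eq_integral_Ioc,
    ← intervalIntegral.integral_of_le hp, ← intervalIntegral.integral_of_le zero_le_one,
    eq_div_iff (right_ne_zero_of_mul (by rw [← h1]; exact one_ne_zero)),
    binomialTail_eq_integral hk hkn]
  linear_combination -(∫ x in 0..p, x ^ (k - 1) * (1 - x) ^ (n - k)) * h1

lemma betaDensity_nonneg (k n : ℕ) {x : ℝ} (hx : x ∈ Set.Icc (0 : ℝ) 1) :
    0 ≤ x ^ (k - 1) * (1 - x) ^ (n - k) :=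
  mul_nonneg (pow_nonneg hx.1 _) (pow_nonneg (sub_nonneg.2 hx.2) _)

lemma betaCDF_nonneg (k n : ℕ) (t : ℝ) : 0 ≤ betaCDF k n t :=
  div_nonneg (setIntegral_nonneg (measurableSet_Icc.inter measurableSet_Iic) fun _ hx =>
      betaDensity_nonneg k n hx.1)
    (setIntegral_nonneg measurableSet_Icc fun _ hx => betaDensity_nonneg k n hx)

lemma binomialTail_le_betaCDF {n k : ℕ} (hk : 0 < k) (hkn : k ≤ n) {p t : ℝ} (hp0 : 0 ≤ p)
    (hp1 : p ≤ 1) (hpt : p ≤ t) : binomialTail n k p ≤ betaCDF k n t := by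
  rw [binomialTail_eq_div hk hkn hp0, betaCDF]
  refine div_le_div_of_nonneg_right (setIntegral_mono_set ?_ ?_ ?_)
    (setIntegral_nonneg measurableSet_Icc fun _ hx => betaDensity_nonneg k n hx)
  · exact (Continuous.integrableOn_Icc (by fun_prop)).mono_set Set.inter_subset_left
  · exact (ae_restrict_mem (measurableSet_Icc.inter measurableSet_Iic)).mono
      fun x hx => betaDensity_nonneg k n hx.1
  · exact .of_forall fun x hx => ⟨⟨hx.1, hx.2.trans hp1⟩, hx.2.trans hpt⟩

section IndependentTrials

variable {Ω ι β : Type*} [Fintype ι] {X : ι → Ω → β} {B : Set β}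
  [DecidablePred (· ∈ B)]

lemma setOf_filter_mem_eq_iInter [DecidableEq ι] (S : Finset ι) :
    {ω | ({i | X i ω ∈ B} : Finset ι) = S} =
      ⋂ i, X i ⁻¹' (if i ∈ S then B else Bᶜ) := by
  ext ω
  simp only [Set.mem_ofPred_eq, Set.mem_iInter, Set.mem_preimage, Finset.ext_iff, mem_filter,
    mem_univ, true_and]
  refine forall_congr' fun i => ?_
  split_ifs with hi <;> simp [hi]

variable [MeasurableSpace Ω] [MeasurableSpace β] {P : Measure Ω} [IsProbabilityMeasure P]
  {p : ℝ}

lemma measurableSet_filter_mem_eq (hX : ∀ i, Measurable (X i)) (hB : MeasurableSet B)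
    (S : Finset ι) : MeasurableSet {ω | ({i | X i ω ∈ B} : Finset ι) = S} := by
  classical
  rw [setOf_filter_mem_eq_iInter]
  exact .iInter fun i => hX i (by split_ifs <;> simp [hB])

lemma measureReal_filter_mem_eq (hX : ∀ i, Measurable (X i)) (hind : iIndepFun X P)
    (hB : MeasurableSet B) (hp : ∀ i, P.real (X i ⁻¹' B) = p) (S : Finset ι) :
    P.real {ω | ({i | X i ω ∈ B} : Finset ι) = S} =
      p ^ #S * (1 - p) ^ (Fintype.card ι - #S) := by
  classical
  have hfactor (i : ι) :
      P.real (X i ⁻¹' (if i ∈ S then B else Bᶜ)) = if i ∈ S then p else 1 - p := by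
    split_ifs
    · exact hp i
    · rw [Set.preimage_compl, probReal_compl_eq_one_sub (hX i hB), hp i]
  have hprod := hind.measure_inter_preimage_eq_mul univ
    (sets := fun i => if i ∈ S then B else Bᶜ) fun i _ => by split_ifs <;> simp [hB]
  simp only [mem_univ, Set.iInter_true] at hprod
  rw [setOf_filter_mem_eq_iInter, measureReal_def, hprod, ENNReal.toReal_prod]
  simp [← measureReal_def, hfactor, prod_ite, filter_not, card_univ_sdiff]

lemma measureReal_le_card_filter_mem_eq_binomialTail (hX : ∀ i, Measurable (X i))
    (hind : iIndepFun X P) (hB : MeasurableSet B) (hp : ∀ i, P.real (X i ⁻¹' B) = p)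
    (k : ℕ) : P.real {ω | k ≤ #{i | X i ω ∈ B}} = binomialTail (Fintype.card ι) k p := by
  classical
  have hevent : {ω | k ≤ #{i | X i ω ∈ B}} =
      ⋃ S ∈ ({S | k ≤ #S} : Finset (Finset ι)),
        {ω | ({i | X i ω ∈ B} : Finset ι) = S} := by
    ext ω
    simp
  have hdisj : Set.PairwiseDisjoint (({S | k ≤ #S} : Finset (Finset ι)) : Set (Finset ι))
      fun S => {ω | ({i | X i ω ∈ B} : Finset ι) = S} :=
    fun S _ T _ hST => Set.disjoint_left.2 fun ω hS hT => hST (hS.symm.trans hT)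
  rw [hevent, measureReal_biUnion_finset hdisj fun S _ => measurableSet_filter_mem_eq hX hB S,
    sum_congr rfl fun S _ => measureReal_filter_mem_eq hX hind hB hp S, sum_filter,
    ← powerset_univ, sum_powerset_apply_card (fun m => if k ≤ m then
      p ^ m * (1 - p) ^ (Fintype.card ι - m) else 0), binomialTail, card_univ]
  simp only [smul_ite, smul_zero, nsmul_eq_mul, ← mul_assoc]
  rw [← sum_filter]
  congr 1
  ext j
  simp [and_comm]

end IndependentTrials

section CDF

variable {Ω : Type*} [MeasurableSpace Ω] {P : Measure Ω} [IsProbabilityMeasure P]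
  {Z : Ω → ℝ}

lemma eq_cdf_map (hZ : Measurable Z) {F : ℝ → ℝ}
    (hF : ∀ z, F z = P.real {ω | Z ω ≤ z}) :
    F = cdf (P.map Z) := by
  have := Measure.isProbabilityMeasure_map (μ := P) hZ.aemeasurable
  ext z
  rw [hF, cdf_eq_real, map_measureReal_apply hZ measurableSet_Iic]
  rfl

lemma measureReal_cdf_map_le (hZ : Measurable Z) {s : Set ℝ} (hs : s.Finite)
    (hZs : ∀ ω, Z ω ∈ s) {t : ℝ} (ht : 0 ≤ t) :
    P.real {ω | cdf (P.map Z) (Z ω) ≤ t} ≤ t := by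
  rcases ({z ∈ s | cdf (P.map Z) z ≤ t} : Set ℝ).eq_empty_or_nonempty with hW | hW
  · have hempty : {ω | cdf (P.map Z) (Z ω) ≤ t} = ∅ :=
      Set.eq_empty_of_forall_notMem fun ω hω => hW.subset ⟨hZs ω, hω⟩
    rw [hempty, measureReal_empty]
    exact ht
  obtain ⟨z₀, ⟨-, hz₀⟩, hmax⟩ :=
    Set.exists_max_image _ id (hs.subset (Set.sep_subset _ _)) hW
  have hevent : {ω | cdf (P.map Z) (Z ω) ≤ t} = Z ⁻¹' Set.Iic z₀ :=
    Set.ext fun ω =>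
      ⟨fun hω => hmax (Z ω) ⟨hZs ω, hω⟩, fun hω => (monotone_cdf _ hω).trans hz₀⟩
  have := Measure.isProbabilityMeasure_map (μ := P) hZ.aemeasurable
  rwa [hevent, ← map_measureReal_apply hZ measurableSet_Iic, ← cdf_eq_real]

end CDF

theorem cdf_empQuantile_dominates_beta_general
    {Ω ι : Type*} [MeasurableSpace Ω] (P : Measure Ω) [IsProbabilityMeasure P]
    [Fintype ι]
    (a : ι → ℝ)
    (n : ℕ) (hn : 1 ≤ n)
    (Z : Fin n → Ω → ℝ) (hmeas : ∀ i, Measurable (Z i))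
    (hiid : iIndepFun Z P)
    (hident : ∀ i j, IdentDistrib (Z i) (Z j) P P)
    (hsupp : ∀ i ω, Z i ω ∈ Set.range a)
    (F : ℝ → ℝ) (hF : ∀ z, F z = (P {ω | Z ⟨0, hn⟩ ω ≤ z}).toReal)
    (q : ℝ) (hq : q ∈ Set.Ioc (0 : ℝ) 1) (t : ℝ) :
    (P {ω | F (empQuantile (fun i => Z i ω) q) ≤ t}).toReal ≤
      betaCDF ⌈(n : ℝ) * q⌉₊ n t := by
  obtain rfl := eq_cdf_map (hmeas _) hF
  set k := ⌈(n : ℝ) * q⌉₊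
  have hk : 0 < k := Nat.ceil_pos.2 (mul_pos (by exact_mod_cast hn) hq.1)
  have hkn : k ≤ n := Nat.ceil_le.2 (mul_le_of_le_one_right n.cast_nonneg hq.2)
  rcases lt_or_ge t 0 with ht | ht
  · have hempty :
        {ω | cdf (P.map (Z ⟨0, hn⟩)) (empQuantile (fun i => Z i ω) q) ≤ t} = ∅ :=
      Set.eq_empty_of_forall_notMem fun _ hω => (cdf_nonneg _ _).not_gt (hω.trans_lt ht)
    simpa [hempty] using betaCDF_nonneg k n t
  set B := {z | cdf (P.map (Z ⟨0, hn⟩)) z ≤ t}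
  have hB : MeasurableSet B := (monotone_cdf _).measurable measurableSet_Iic
  have hevent : {ω | cdf (P.map (Z ⟨0, hn⟩)) (empQuantile (fun i => Z i ω) q) ≤ t} =
      {ω | k ≤ #{i | Z i ω ∈ B}} := by
    ext ω
    rw [Set.mem_ofPred_eq, empQuantile_eq_sInf hn,
      apply_sInf_setOf_le_card_le_iff _ hk (by simpa using hkn) (monotone_cdf _)]
    rfl
  have hp (i : Fin n) : P.real (Z i ⁻¹' B) = P.real (Z ⟨0, hn⟩ ⁻¹' B) :=
    congrArg ENNReal.toReal ((hident i _).measure_mem_eq hB)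
  rw [← measureReal_def, hevent,
    measureReal_le_card_filter_mem_eq_binomialTail hmeas hiid hB hp, Fintype.card_fin]
  exact binomialTail_le_betaCDF hk hkn measureReal_nonneg measureReal_le_one
    (measureReal_cdf_map_le (hmeas _) (Set.finite_range a) (hsupp _) ht)

/-- **The plug-in CDF value at the empirical quantile of i.i.d. finitely supported
samples stochastically dominates `Beta(⌈nq⌉, n - ⌈nq⌉ + 1)`:** for all `t`,
`P(F(F̂⁻¹(q)) ≤ t) ≤ P(Z_Beta ≤ t)`. -/
theorem cdf_empQuantile_dominates_beta
    {Ω ι : Type*} [MeasurableSpace Ω] (P : Measure Ω) [IsProbabilityMeasure P]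
    [Fintype ι] [Nonempty ι]
    (a : ι → ℝ)
    (n : ℕ) (hn : 1 ≤ n)
    (Z : Fin n → Ω → ℝ) (hmeas : ∀ i, Measurable (Z i))
    (hiid : iIndepFun Z P)
    (hident : ∀ i j, IdentDistrib (Z i) (Z j) P P)
    (hsupp : ∀ i ω, Z i ω ∈ Set.range a)
    (F : ℝ → ℝ) (hF : ∀ z, F z = (P {ω | Z ⟨0, hn⟩ ω ≤ z}).toReal)
    (q : ℝ) (hq : q ∈ Set.Ioc (0 : ℝ) 1) (t : ℝ) :
    (P {ω | F (empQuantile (fun i => Z i ω) q) ≤ t}).toReal ≤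
      betaCDF ⌈(n : ℝ) * q⌉₊ n t :=
  cdf_empQuantile_dominates_beta_general P a n hn Z hmeas hiid hident hsupp F hF q hq t
end

section
/- Let w_1,…,w_m ∈ ℝ and λ > 0, and let J be a random index in {1,…,m} with P(J = j) = exp(−λ·w_j) / Σ_{j'=1}^m exp(−λ·w_{j'}). Then for every δ ∈ (0,1), P( w_J ≥ min_{1≤j≤m} w_j + log(m/δ)/λ ) ≤ δ. -/
open MeasureTheory ProbabilityTheory

/-!
Every Gibbs weight is at most `exp (-λ (w j - w k))` for any competitor `k`, in particular for a
minimiser. Past the threshold `min w + log (m/δ)/λ` this is at most `δ/m`, and the union bound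
over the at most `m` bad candidates gives `δ`.
-/

open Real in
theorem exp_neg_mul_div_sum_le {ι : Type*} [Fintype ι] (w : ι → ℝ) (lam : ℝ) (j k : ι) :
    exp (-lam * w j) / ∑ i, exp (-lam * w i) ≤ exp (-lam * (w j - w k)) :=
  calc exp (-lam * w j) / ∑ i, exp (-lam * w i)
      ≤ exp (-lam * w j) / exp (-lam * w k) :=
        div_le_div_of_nonneg_left (exp_pos _).le (exp_pos _) <|
          Finset.single_le_sum (f := fun i ↦ exp (-lam * w i)) (fun _ _ ↦ (exp_pos _).le)
            (Finset.mem_univ k)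
    _ = exp (-lam * (w j - w k)) := by rw [← exp_sub]; ring_nf

open Real in
theorem exp_neg_mul_le_inv_of_log_div_le {lam a x : ℝ} (hlam : 0 < lam) (ha : 0 < a)
    (hx : log a / lam ≤ x) : exp (-lam * x) ≤ a⁻¹ := by
  have hlog : log a ≤ lam * x := (div_le_iff₀' hlam).mp hx
  calc exp (-lam * x) ≤ exp (log a⁻¹) := exp_le_exp.mpr (by rw [log_inv]; linarith)
    _ = a⁻¹ := exp_log (inv_pos.mpr ha)

theorem measure_setOf_comp_le_card_mul {Ω ι : Type*} [MeasurableSpace Ω] [Fintype ι]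
    (P : Measure Ω) (J : Ω → ι) (p : ι → Prop) (ε : ENNReal)
    (h : ∀ j, p j → P {ω | J ω = j} ≤ ε) :
    P {ω | p (J ω)} ≤ Fintype.card ι * ε := by
  classical
  have hcover : {ω | p (J ω)} = ⋃ j ∈ Finset.univ.filter p, {ω | J ω = j} := by
    ext ω; simp
  calc P {ω | p (J ω)} ≤ ∑ j ∈ Finset.univ.filter p, P {ω | J ω = j} := by
        rw [hcover]; exact measure_biUnion_finset_le _ _
    _ ≤ ∑ _j ∈ Finset.univ.filter p, ε :=
        Finset.sum_le_sum fun j hj ↦ h j (Finset.mem_filter.mp hj).2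
    _ ≤ Fintype.card ι * ε := by
        rw [Finset.sum_const, nsmul_eq_mul]
        gcongr
        exact_mod_cast Finset.card_filter_le _ _

/-- **Utility (accuracy) guarantee of the exponential mechanism** over a finite
candidate set: if `J` is drawn with probability proportional to `exp(-λ·w j)`, then
with probability at least `1 - δ` the selected weight `w J` exceeds the minimal weight
by at most `log(m/δ)/λ`, where `m` is the number of candidates. -/
theorem exponential_mechanism_utility
    {Ω ι : Type*} [MeasurableSpace Ω] (P : Measure Ω) [IsProbabilityMeasure P]
    [Fintype ι] [Nonempty ι]
    (w : ι → ℝ) (lam : ℝ) (hlam : 0 < lam)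
    (J : Ω → ι)
    (hJ : ∀ j : ι, P {ω | J ω = j} =
      ENNReal.ofReal (Real.exp (-lam * w j) / ∑ j' : ι, Real.exp (-lam * w j')))
    (δ : ℝ) (hδ : δ ∈ Set.Ioo (0 : ℝ) 1) :
    P {ω | (⨅ j, w j) + Real.log ((Fintype.card ι : ℝ) / δ) / lam ≤ w (J ω)} ≤
      ENNReal.ofReal δ := by
  obtain ⟨hδ, -⟩ := hδ
  obtain ⟨k, hk⟩ := exists_eq_ciInf_of_finite (f := w)
  have hm : (0 : ℝ) < Fintype.card ι := by exact_mod_cast Fintype.card_pos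
  have hbad : ∀ j, (⨅ j, w j) + Real.log (Fintype.card ι / δ) / lam ≤ w j →
      P {ω | J ω = j} ≤ ENNReal.ofReal (δ / Fintype.card ι) := by
    intro j hj
    rw [hJ j]
    refine ENNReal.ofReal_le_ofReal ((exp_neg_mul_div_sum_le w lam j k).trans ?_)
    exact (exp_neg_mul_le_inv_of_log_div_le hlam (by positivity) (by rw [hk]; linarith)).trans_eq
      (inv_div _ _)
  calc _ ≤ Fintype.card ι * ENNReal.ofReal (δ / Fintype.card ι) :=
        measure_setOf_comp_le_card_mul P J _ _ hbad
    _ = ENNReal.ofReal δ := by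
        rw [← ENNReal.ofReal_natCast, ← ENNReal.ofReal_mul hm.le, mul_div_cancel₀ _ hm.ne']
end

section
/- Let Z be a random variable supported on a finite set {a_1,…,a_m} ⊂ ℝ, with CDF F(z) = P(Z ≤ z), and let p_max = max_{1≤i≤m} P(Z = a_i). Then for every u ∈ [0,1], u − p_max ≤ P( F(Z) ≤ u ) ≤ u. In particular, F(Z) is super-uniform (stochastically dominates the uniform distribution on [0,1]) and is stochastically dominated by U + p_max with U uniform on [0,1]. -/
open MeasureTheory ProbabilityTheory

/-- **The probability integral transform of a finitely supported random variable.**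
If `Z` takes values in the finite set `{a i}` with CDF `F` and maximal atom size
`pmax`, then for every `u ∈ [0,1]`, `u - pmax ≤ P(F(Z) ≤ u) ≤ u`; in particular
`F(Z)` is super-uniform and is stochastically dominated by `U + pmax` for `U`
uniform on `[0,1]`. -/
theorem cdf_transform_superuniform
    {Ω ι : Type*} [MeasurableSpace Ω] (P : Measure Ω) [IsProbabilityMeasure P]
    [Fintype ι] [Nonempty ι]
    (a : ι → ℝ)
    (Z : Ω → ℝ) (hZmeas : Measurable Z)
    (hZsupp : ∀ ω, Z ω ∈ Set.range a)
    (F : ℝ → ℝ) (hF : ∀ z, F z = (P {ω | Z ω ≤ z}).toReal)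
    (pmax : ℝ) (hpmax : pmax = ⨆ i, (P {ω | Z ω = a i}).toReal)
    (u : ℝ) (hu : u ∈ Set.Icc (0 : ℝ) 1) :
    u - pmax ≤ (P {ω | F (Z ω) ≤ u}).toReal ∧ (P {ω | F (Z ω) ≤ u}).toReal ≤ u := by
  have hPt : ∀ s : Set Ω, P s ≠ ⊤ := fun s => measure_ne_top P s
  have hatom : ∀ i, (P {ω | Z ω = a i}).toReal ≤ pmax := by
    intro i
    rw [hpmax]
    exact le_ciSup (f := fun i => (P {ω | Z ω = a i}).toReal) (Set.Finite.bddAbove (Set.finite_range _)) i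
  have hpmax0 : 0 ≤ pmax := le_trans ENNReal.toReal_nonneg (hatom (Classical.arbitrary ι))
  have hFmono : Monotone F := by
    intro x y hxy
    rw [hF, hF]
    exact ENNReal.toReal_mono (hPt _) (measure_mono fun ω hω => le_trans hω hxy)
  set S : Finset ℝ := Finset.image a Finset.univ with hS
  have hZS : ∀ ω, Z ω ∈ S := by
    intro ω
    obtain ⟨i, hi⟩ := hZsupp ω
    exact Finset.mem_image.mpr ⟨i, Finset.mem_univ i, hi⟩
  constructor
  · -- lower bound
    set U := S.filter (fun v => u < F v) with hU
    by_cases hUe : U.Nonempty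
    · set v0 := U.min' hUe with hv0
      have hv0U : v0 ∈ U := U.min'_mem hUe
      have hv0S : v0 ∈ S := (Finset.mem_filter.mp hv0U).1
      have huv0 : u < F v0 := (Finset.mem_filter.mp hv0U).2
      obtain ⟨i, -, hi⟩ := Finset.mem_image.mp hv0S
      have hsub : {ω | Z ω < v0} ⊆ {ω | F (Z ω) ≤ u} := by
        intro ω hω
        simp only [Set.mem_setOf_eq] at hω ⊢
        by_contra h
        push_neg at h
        have : Z ω ∈ U := Finset.mem_filter.mpr ⟨hZS ω, h⟩
        exact absurd (U.min'_le _ this) (not_le.mpr hω)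
      have hmeq : MeasurableSet {ω | Z ω = v0} := by
        have := hZmeas (measurableSet_singleton v0)
        simpa [Set.preimage, Set.mem_singleton_iff] using this
      have hsplit : P {ω | Z ω ≤ v0} = P {ω | Z ω < v0} + P {ω | Z ω = v0} := by
        rw [← measure_union ?_ hmeq]
        · congr 1; ext ω
          simp [le_iff_lt_or_eq]
        · rw [Set.disjoint_left]
          intro ω h1 h2
          exact absurd h2 (ne_of_lt h1)
      have hsplit' : F v0 = (P {ω | Z ω < v0}).toReal + (P {ω | Z ω = v0}).toReal := by
        rw [hF, hsplit, ENNReal.toReal_add (hPt _) (hPt _)]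
      have hle : (P {ω | Z ω < v0}).toReal ≤ (P {ω | F (Z ω) ≤ u}).toReal :=
        ENNReal.toReal_mono (hPt _) (measure_mono hsub)
      have hia : (P {ω | Z ω = v0}).toReal ≤ pmax := hi ▸ hatom i
      linarith
    · -- U empty: F(Z ω) ≤ u always
      have : {ω | F (Z ω) ≤ u} = Set.univ := by
        ext ω
        simp only [Set.mem_setOf_eq, Set.mem_univ, iff_true]
        by_contra h
        push_neg at h
        exact hUe ⟨Z ω, Finset.mem_filter.mpr ⟨hZS ω, h⟩⟩
      rw [this, measure_univ]
      simp only [ENNReal.toReal_one]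
      linarith [hu.2]
  · -- upper bound
    set T := S.filter (fun v => F v ≤ u) with hT
    by_cases hTe : T.Nonempty
    · set v1 := T.max' hTe with hv1
      have hv1T : v1 ∈ T := T.max'_mem hTe
      have hv1F : F v1 ≤ u := (Finset.mem_filter.mp hv1T).2
      have heq : {ω | F (Z ω) ≤ u} = {ω | Z ω ≤ v1} := by
        ext ω
        simp only [Set.mem_setOf_eq]
        constructor
        · intro h
          exact T.le_max' _ (Finset.mem_filter.mpr ⟨hZS ω, h⟩)
        · intro h
          exact le_trans (hFmono h) hv1F
      rw [heq, ← hF]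
      exact hv1F
    · have : {ω | F (Z ω) ≤ u} = ∅ := by
        ext ω
        simp only [Set.mem_setOf_eq, Set.mem_empty_iff_false, iff_false]
        intro h
        exact hTe ⟨Z ω, Finset.mem_filter.mpr ⟨hZS ω, h⟩⟩
      rw [this, measure_empty]
      simpa using hu.1
end

section
/- Let c ≥ 0 and let X_1,…,X_n be i.i.d. random variables with values in [0,1] satisfying P(X_1 ≤ u) ≥ u − c for all u ∈ [0,1], and let X_(k) denote the k-th smallest order statistic for 1 ≤ k ≤ n. Then X_(k) is stochastically dominated by B + c, where B ∼ Beta(k, n−k+1): for every t ∈ ℝ, P( X_(k) ≤ t ) ≥ P( B + c ≤ t ). -/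
/-!
`X₍ₖ₎ ≤ t` exactly when at least `k` of the `Xᵢ` are `≤ t`, so by independence
`P(X₍ₖ₎ ≤ t) = ∑_{j ≥ k} C(n,j) pʲ (1-p)ⁿ⁻ʲ` with `p = P(X₁ ≤ t)`. The derivative of this
binomial tail in `p` telescopes to `n C(n-1,k-1) pᵏ⁻¹ (1-p)ⁿ⁻ᵏ`, so the tail is the
`Beta(k, n-k+1)` CDF at `p`. That CDF is monotone, and `p ≥ t - c` when `t < 1` while `p = 1`
when `t ≥ 1`.
-/

open MeasureTheory ProbabilityTheory

/-- The `k`-th smallest order statistic (0-indexed) of the tuple `x`. -/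
noncomputable def orderStat {n : ℕ} (x : Fin n → ℝ) (k : Fin n) : ℝ :=
  x (Tuple.sort x k)

open Finset Polynomial

noncomputable def binomTail (k n : ℕ) : ℝ[X] :=
  ∑ j ∈ Icc k n, bernsteinPolynomial ℝ n j

lemma binomTail_eval (k n : ℕ) (p : ℝ) :
    (binomTail k n).eval p = ∑ j ∈ Icc k n, (n.choose j : ℝ) * p ^ j * (1 - p) ^ (n - j) := by
  simp [binomTail, eval_finsetSum, bernsteinPolynomial]

lemma binomTail_eval_zero {k : ℕ} (hk : 1 ≤ k) (n : ℕ) : (binomTail k n).eval 0 = 0 := by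
  rw [binomTail, eval_finsetSum]
  exact sum_eq_zero fun j hj => by
    rw [bernsteinPolynomial.eval_at_0, if_neg (by grind)]

lemma binomTail_eval_one {k n : ℕ} (hkn : k ≤ n) : (binomTail k n).eval 1 = 1 := by
  simp [binomTail, eval_finsetSum, bernsteinPolynomial.eval_at_1, hkn]

lemma derivative_binomTail {k n : ℕ} (hk : 1 ≤ k) (hkn : k ≤ n) :
    derivative (binomTail k n) = n * bernsteinPolynomial ℝ (n - 1) (k - 1) := by
  obtain ⟨i, rfl⟩ := Nat.exists_eq_add_of_le' hk
  have htel := sum_Ico_sub (fun j => -bernsteinPolynomial ℝ (n - 1) j) (show i ≤ n by omega)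
  rw [neg_sub_neg, bernsteinPolynomial.eq_zero_of_lt ℝ (by omega : n - 1 < n), sub_zero] at htel
  simp only [neg_sub_neg] at htel
  rw [binomTail, derivative_sum, ← Finset.Ico_add_one_right_eq_Icc, ← sum_Ico_add' _ i n 1]
  simp only [bernsteinPolynomial.derivative_succ, ← mul_sum, htel, Nat.add_sub_cancel]

lemma mul_choose_pred_pos {k n : ℕ} (hk : 1 ≤ k) (hkn : k ≤ n) :
    (0 : ℝ) < n * (n - 1).choose (k - 1) := by
  have := Nat.choose_pos (show k - 1 ≤ n - 1 by omega)
  have : 0 < n := by omega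
  positivity

lemma integral_pow_mul_one_sub_pow {k n : ℕ} (hk : 1 ≤ k) (hkn : k ≤ n) (a b : ℝ) :
    ∫ x in a..b, x ^ (k - 1) * (1 - x) ^ (n - k) =
      ((binomTail k n).eval b - (binomTail k n).eval a) / (n * (n - 1).choose (k - 1)) := by
  rw [eq_div_iff (mul_choose_pred_pos hk hkn).ne', ← intervalIntegral.integral_mul_const]
  refine intervalIntegral.integral_deriv_eq_sub' _ ?_ (fun x _ => (binomTail k n).differentiableAt)
    (by fun_prop)
  ext x
  rw [Polynomial.deriv, derivative_binomTail hk hkn]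
  simp [bernsteinPolynomial, show n - 1 - (k - 1) = n - k by omega]
  ring

lemma setIntegral_pow_mul_one_sub_pow_mono_set (k n : ℕ) {s t : Set ℝ} (hst : s ⊆ t)
    (ht : t ⊆ Set.Icc 0 1) :
    ∫ x in s, x ^ (k - 1) * (1 - x) ^ (n - k) ≤ ∫ x in t, x ^ (k - 1) * (1 - x) ^ (n - k) := by
  refine setIntegral_mono_set ?_ ?_ (Filter.Eventually.of_forall hst)
  · exact (Continuous.integrableOn_Icc (by fun_prop)).mono_set ht
  · refine ae_restrict_of_ae_restrict_of_subset ht (ae_restrict_of_forall_mem measurableSet_Icc ?_)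
    exact fun x hx => mul_nonneg (pow_nonneg hx.1 _) (pow_nonneg (sub_nonneg.2 hx.2) _)

lemma betaCDF_mono (k n : ℕ) : Monotone (betaCDF k n) := fun a b hab =>
  div_le_div_of_nonneg_right
    (setIntegral_pow_mul_one_sub_pow_mono_set k n
      (Set.inter_subset_inter_right _ (Set.Iic_subset_Iic.2 hab)) Set.inter_subset_left)
    (by simpa using setIntegral_pow_mul_one_sub_pow_mono_set k n (Set.empty_subset _) le_rfl)

lemma betaCDF_le_one (k n : ℕ) (s : ℝ) : betaCDF k n s ≤ 1 :=
  div_le_one_of_le₀ (setIntegral_pow_mul_one_sub_pow_mono_set k n Set.inter_subset_left le_rfl)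
    (by simpa using setIntegral_pow_mul_one_sub_pow_mono_set k n (Set.empty_subset _) le_rfl)

lemma betaCDF_eq_binomTail_eval {k n : ℕ} (hk : 1 ≤ k) (hkn : k ≤ n) {s : ℝ}
    (hs : s ∈ Set.Icc 0 1) : betaCDF k n s = (binomTail k n).eval s := by
  have hIcc : Set.Icc 0 1 ∩ Set.Iic s = Set.Icc 0 s := by
    ext x
    simp only [Set.mem_inter_iff, Set.mem_Icc, Set.mem_Iic]
    exact ⟨fun h => ⟨h.1.1, h.2⟩, fun h => ⟨⟨h.1, h.2.trans hs.2⟩, h.2⟩⟩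
  rw [betaCDF, hIcc, integral_Icc_eq_integral_Ioc,
    integral_Icc_eq_integral_Ioc, ← intervalIntegral.integral_of_le hs.1,
    ← intervalIntegral.integral_of_le zero_le_one, integral_pow_mul_one_sub_pow hk hkn,
    integral_pow_mul_one_sub_pow hk hkn, binomTail_eval_zero hk, binomTail_eval_one hkn]
  rw [sub_zero, sub_zero, div_div_div_cancel_right₀ (mul_choose_pred_pos hk hkn).ne', div_one]

lemma Monotone.apply_le_iff_lt_card_filter {α : Type*} [Preorder α] [DecidableLE α] {n : ℕ}
    {g : Fin n → α} (hg : Monotone g) (k : Fin n) (t : α) : g k ≤ t ↔ (k : ℕ) < #{j | g j ≤ t} := by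
  constructor
  · intro hk
    have hsub : Iic k ⊆ ({j | g j ≤ t} : Finset (Fin n)) := fun j hj =>
      mem_filter.2 ⟨mem_univ j, (hg (mem_Iic.1 hj)).trans hk⟩
    have := card_le_card hsub
    rw [Fin.card_Iic] at this
    omega
  · intro hcard
    by_contra hk
    have hsub : ({j | g j ≤ t} : Finset (Fin n)) ⊆ Iio k := fun j hj =>
      mem_Iio.2 (lt_of_not_ge fun hkj => hk ((hg hkj).trans (mem_filter.1 hj).2))
    have := card_le_card hsub
    rw [Fin.card_Iio] at this
    omega

lemma orderStat_le_iff {n : ℕ} (x : Fin n → ℝ) (k : Fin n) (t : ℝ) :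
    orderStat x k ≤ t ↔ (k : ℕ) < #{i | x i ≤ t} := by
  have hcard : #{j | x (Tuple.sort x j) ≤ t} = #{i | x i ≤ t} :=
    card_equiv (Tuple.sort x) fun j => by simp
  rw [orderStat, ← hcard]
  exact (Tuple.monotone_sort x).apply_le_iff_lt_card_filter k t

namespace ProbabilityTheory

lemma iIndepFun.iIndepSet_preimage {Ω ι β : Type*} [MeasurableSpace Ω] [MeasurableSpace β]
    {P : Measure Ω} {X : ι → Ω → β} (hX : iIndepFun X P) (hmeas : ∀ i, Measurable (X i))
    {s : Set β} (hs : MeasurableSet s) : iIndepSet (fun i => X i ⁻¹' s) P :=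
  (iIndepSet_iff_meas_biInter fun i => hmeas i hs).2 fun S =>
    hX.measure_inter_preimage_eq_mul S fun _ _ => hs

variable {Ω ι : Type*} [Fintype ι] {A : ι → Set Ω} [∀ i, DecidablePred (· ∈ A i)]

lemma measurable_card_filter_mem [MeasurableSpace Ω] (hmeas : ∀ i, MeasurableSet (A i)) :
    Measurable fun ω => #{i | ω ∈ A i} := by
  simp_rw [card_filter]
  exact Finset.measurable_sum _ fun i _ => Measurable.ite (hmeas i) measurable_const measurable_const

variable [DecidableEq ι]

lemma setOf_filter_mem_eq_iInter (S : Finset ι) :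
    {ω | ({i | ω ∈ A i} : Finset ι) = S} = ⋂ i, if i ∈ S then A i else (A i)ᶜ := by
  ext ω
  simp only [Set.mem_ofPred_eq, Set.mem_iInter, Finset.ext_iff, mem_filter, mem_univ, true_and]
  refine forall_congr' fun i => ?_
  split_ifs with hi <;> simp [hi]

variable [MeasurableSpace Ω] {P : Measure Ω} {p : ℝ}

lemma measurableSet_setOf_filter_mem_eq (hmeas : ∀ i, MeasurableSet (A i)) (S : Finset ι) :
    MeasurableSet {ω | ({i | ω ∈ A i} : Finset ι) = S} := by
  rw [setOf_filter_mem_eq_iInter]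
  exact .iInter fun i => by split_ifs; exacts [hmeas i, (hmeas i).compl]

lemma iIndepSet.measureReal_setOf_filter_mem_eq (hA : iIndepSet A P)
    (hmeas : ∀ i, MeasurableSet (A i)) (hp : ∀ i, P.real (A i) = p) (S : Finset ι) :
    P.real {ω | ({i | ω ∈ A i} : Finset ι) = S} = p ^ #S * (1 - p) ^ (Fintype.card ι - #S) := by
  have := hA.isProbabilityMeasure
  have hgen : ∀ i, MeasurableSet[MeasurableSpace.generateFrom {A i}]
      (if i ∈ S then A i else (A i)ᶜ) := fun i => by
    have := MeasurableSpace.measurableSet_generateFrom (Set.mem_singleton (A i))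
    split_ifs; exacts [this, this.compl]
  rw [setOf_filter_mem_eq_iInter, measureReal_def,
    ((iIndepSet_iff_iIndep _ _).1 hA).meas_iInter hgen, ENNReal.toReal_prod,
    ← prod_mul_prod_compl S]
  have hin : ∀ i ∈ S, P.real (if i ∈ S then A i else (A i)ᶜ) = p := fun i hi => by
    rw [if_pos hi, hp]
  have hout : ∀ i ∈ Sᶜ, P.real (if i ∈ S then A i else (A i)ᶜ) = 1 - p := fun i hi => by
    rw [if_neg (mem_compl.1 hi), measureReal_compl (hmeas i), hp, probReal_univ]
  simp_rw [← measureReal_def]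
  rw [prod_congr rfl hin, prod_congr rfl hout, prod_const, prod_const, card_compl]

lemma iIndepSet.measureReal_card_filter_mem_eq (hA : iIndepSet A P)
    (hmeas : ∀ i, MeasurableSet (A i)) (hp : ∀ i, P.real (A i) = p) (j : ℕ) :
    P.real {ω | #{i | ω ∈ A i} = j} =
      (Fintype.card ι).choose j * p ^ j * (1 - p) ^ (Fintype.card ι - j) := by
  have := hA.isProbabilityMeasure
  have hset : {ω | #{i | ω ∈ A i} = j} =
      ⋃ S ∈ (powersetCard j univ : Finset (Finset ι)), {ω | ({i | ω ∈ A i} : Finset ι) = S} := by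
    ext ω
    simp [mem_powersetCard]
  rw [hset, measureReal_biUnion_finset
    (fun S _ S' _ hne => Set.disjoint_left.2 fun ω h h' => hne (h.symm.trans h'))
    fun S _ => measurableSet_setOf_filter_mem_eq hmeas S]
  rw [sum_congr rfl fun S hS => by
      rw [hA.measureReal_setOf_filter_mem_eq hmeas hp, (mem_powersetCard.1 hS).2],
    sum_const, card_powersetCard, card_univ, nsmul_eq_mul, mul_assoc]

lemma iIndepSet.measureReal_le_card_filter_mem (hA : iIndepSet A P)
    (hmeas : ∀ i, MeasurableSet (A i)) (hp : ∀ i, P.real (A i) = p) (k : ℕ) :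
    P.real {ω | k ≤ #{i | ω ∈ A i}} = (binomTail k (Fintype.card ι)).eval p := by
  have := hA.isProbabilityMeasure
  have hset : {ω | k ≤ #{i | ω ∈ A i}} =
      ⋃ j ∈ Icc k (Fintype.card ι), {ω | #{i | ω ∈ A i} = j} := by
    ext ω
    simp only [Set.mem_ofPred_eq, Set.mem_iUnion, mem_Icc, exists_prop]
    exact ⟨fun h => ⟨_, ⟨h, card_le_univ _⟩, rfl⟩, fun ⟨j, hj, hω⟩ => hω ▸ hj.1⟩
  have hmeas_eq : ∀ j : ℕ, MeasurableSet {ω | #{i | ω ∈ A i} = j} := fun j =>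
    measurable_card_filter_mem hmeas (measurableSet_singleton j)
  rw [hset, measureReal_biUnion_finset
    (fun j _ j' _ hne => Set.disjoint_left.2 fun ω h h' => hne (h.symm.trans h'))
    fun j _ => hmeas_eq j, binomTail_eval]
  exact sum_congr rfl fun j _ => hA.measureReal_card_filter_mem_eq hmeas hp j

lemma measureReal_orderStat_le {n : ℕ} {X : Fin n → Ω → ℝ} (hmeas : ∀ i, Measurable (X i))
    (hiid : iIndepFun X P) (hident : ∀ i j, IdentDistrib (X i) (X j) P P) (k i₀ : Fin n) (t : ℝ) :
    P.real {ω | orderStat (fun i => X i ω) k ≤ t} =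
      (binomTail (k + 1) n).eval (P.real {ω | X i₀ ω ≤ t}) := by
  have hindep : iIndepSet (fun i => {ω | X i ω ≤ t}) P :=
    hiid.iIndepSet_preimage hmeas measurableSet_Iic
  have h := hindep.measureReal_le_card_filter_mem (p := P.real {ω | X i₀ ω ≤ t})
    (fun j => hmeas j measurableSet_Iic)
    (fun j => congrArg ENNReal.toReal ((hident j i₀).measure_mem_eq measurableSet_Iic)) (k + 1)
  rw [Fintype.card_fin] at h
  simp_rw [orderStat_le_iff, Nat.lt_iff_add_one_le]
  exact h

end ProbabilityTheory

/-- **Order statistics of i.i.d. nearly sub-uniform random variables are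
stochastically dominated by shifted Beta order statistics:** if
`P(X₁ ≤ u) ≥ u - c` for all `u ∈ [0,1]`, then the `k`-th smallest order statistic
satisfies `P(X₍ₖ₎ ≤ t) ≥ P(B + c ≤ t)` for `B ∼ Beta(k, n - k + 1)`, i.e. the
right-hand side equals the Beta CDF evaluated at `t - c`. -/
theorem orderStat_dominated_by_shifted_beta
    {Ω : Type*} [MeasurableSpace Ω] (P : Measure Ω) [IsProbabilityMeasure P]
    (c : ℝ) (hc : 0 ≤ c)
    (n : ℕ) (X : Fin n → Ω → ℝ)
    (hmeas : ∀ i, Measurable (X i))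
    (hiid : iIndepFun X P)
    (hident : ∀ i j, IdentDistrib (X i) (X j) P P)
    (hrange : ∀ i ω, X i ω ∈ Set.Icc (0 : ℝ) 1)
    (hsub : ∀ i, ∀ u ∈ Set.Icc (0 : ℝ) 1, ENNReal.ofReal (u - c) ≤ P {ω | X i ω ≤ u})
    (k : ℕ) (hk1 : 1 ≤ k) (hkn : k ≤ n) (t : ℝ) :
    betaCDF k n (t - c) ≤
      (P {ω | orderStat (fun i => X i ω) ⟨k - 1, by omega⟩ ≤ t}).toReal := by
  set i₀ : Fin n := ⟨0, by omega⟩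
  rw [← measureReal_def, measureReal_orderStat_le hmeas hiid hident _ i₀ t, Fin.val_mk,
    Nat.sub_add_cancel hk1]
  set p := P.real {ω | X i₀ ω ≤ t}
  have hp : p ∈ Set.Icc 0 1 := ⟨measureReal_nonneg, measureReal_le_one⟩
  rcases lt_or_ge t 1 with ht1 | ht1
  · rw [← betaCDF_eq_binomTail_eval hk1 hkn hp]
    apply betaCDF_mono
    rcases lt_or_ge t 0 with ht0 | ht0
    · linarith [hp.1]
    · exact (ENNReal.ofReal_le_iff_le_toReal (measure_ne_top _ _)).1 (hsub i₀ t ⟨ht0, ht1.le⟩)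
  · have hp1 : p = 1 := by
      simp [p, fun ω => (hrange i₀ ω).2.trans ht1]
    rw [hp1, binomTail_eval_one hkn]
    exact betaCDF_le_one k n (t - c)
end

section
/- Let F be the cumulative distribution function of a probability distribution supported on a finite set {a_1,…,a_m} ⊂ ℝ, let Z_1,…,Z_n be i.i.d. with CDF F, and let F̂ be their empirical CDF. Then for every q ∈ (0,1], E[ F(F̂⁻¹(q)) ] ≥ ⌈nq⌉ / (n+1). -/
open MeasureTheory ProbabilityTheory

/-!
Let `W₀, …, Wₙ` be `n + 1` independent samples of the common law `μ` and let `Qⱼ` be the empirical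
quantile of the `n` samples other than `Wⱼ`. By exchangeability, `E[F(F̂⁻¹(q))] = P(Wⱼ ≤ Qⱼ)` for
every `j`, so `(n + 1) E[F(F̂⁻¹(q))] = E[#{j | Wⱼ ≤ Qⱼ}]`. That count is at least `⌈nq⌉` for
every outcome: `Wⱼ ≤ Qⱼ` as soon as fewer than `⌈nq⌉` samples lie strictly below `Wⱼ`, and at
least `⌈nq⌉` indices have that property.
-/

open Finset
open scoped ENNReal

noncomputable def empCount {ι : Type*} [Fintype ι] (x : ι → ℝ) (t : ℝ) : ℕ := #{i | x i ≤ t}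

def strictRank {ι α : Type*} [Fintype ι] [LinearOrder α] (w : ι → α) (j : ι) : ℕ :=
  #{i | w i < w j}

theorem le_card_filter_strictRank_lt {ι α : Type*} [Fintype ι] [LinearOrder α] (w : ι → α)
    {k : ℕ} (hk : k ≤ Fintype.card ι) : k ≤ #{j | strictRank w j < k} := by
  classical
  set J : Finset ι := {j | strictRank w j < k}
  by_contra! hJ
  have hne : Jᶜ.Nonempty := by
    rw [← card_pos, card_compl]
    omega
  -- an entry of least value outside `J` has all strictly smaller entries in `J`
  obtain ⟨j, hjJ, hmin⟩ := Jᶜ.exists_min_image w hne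
  have hsub : ({i | w i < w j} : Finset ι) ⊆ J := fun i hi => by
    by_contra hiJ
    exact (hmin i (mem_compl.2 hiJ)).not_gt (mem_filter.1 hi).2
  exact mem_compl.1 hjJ (mem_filter.2 ⟨mem_univ j, (card_le_card hsub).trans_lt hJ⟩)

section empCount

variable {ι : Type*} [Fintype ι]

theorem empCount_mono (x : ι → ℝ) : Monotone (empCount x) := fun _ _ hst =>
  card_le_card (monotone_filter_right _ fun _ _ hi => hi.trans hst)

theorem empCount_of_forall_le {x : ι → ℝ} {t : ℝ} (h : ∀ i, x i ≤ t) :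
    empCount x t = Fintype.card ι := by
  simp [empCount, h]

theorem natCast_empCount (x : ι → ℝ) (t : ℝ) :
    (empCount x t : ℝ) = ∑ i, (Set.Ici (x i)).indicator 1 t := by
  simp [empCount, Set.indicator_apply]

theorem upperSemicontinuous_empCount (x : ι → ℝ) :
    UpperSemicontinuous fun t => (empCount x t : ℝ) := by
  simp_rw [natCast_empCount]
  exact upperSemicontinuous_sum fun i _ => isClosed_Ici.upperSemicontinuous_indicator zero_le_one

theorem measurable_empCount (t : ℝ) : Measurable fun x : ι → ℝ => (empCount x t : ℝ) := by
  simp_rw [empCount, natCast_card_filter]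
  exact Finset.measurable_sum _ fun i _ =>
    Measurable.ite (measurableSet_le (measurable_pi_apply i) measurable_const)
      measurable_const measurable_const

theorem ncard_setOf_le_eq_empCount (x : ι → ℝ) (t : ℝ) :
    Set.ncard {i | x i ≤ t} = empCount x t := by
  rw [Set.ncard_eq_toFinset_card']
  simp [empCount]

end empCount

section empQuantile

variable {n : ℕ} {q : ℝ}

theorem empQuantile_le_iff (hn : 0 < n) (hq : q ∈ Set.Ioc (0 : ℝ) 1) (x : Fin n → ℝ) (t : ℝ) :
    empQuantile x q ≤ t ↔ q * n ≤ empCount x t := by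
  have hn' : (0 : ℝ) < n := Nat.cast_pos.2 hn
  set S := {z : ℝ | q * n ≤ empCount x z}
  have hS : {z : ℝ | q ≤ (Set.ncard {i | x i ≤ z} : ℝ) / n} = S := by
    ext z
    simp only [Set.mem_ofPred_eq, ncard_setOf_le_eq_empCount, le_div_iff₀ hn', S]
  have hclosed : IsClosed S := (upperSemicontinuous_empCount x).isClosed_preimage _
  have hne : S.Nonempty := by
    obtain ⟨M, hM⟩ := (Set.finite_range x).bddAbove
    refine ⟨M, ?_⟩
    simp only [S, Set.mem_ofPred_eq, empCount_of_forall_le fun i => hM ⟨i, rfl⟩,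
      Fintype.card_fin]
    nlinarith [hq.2]
  have hbdd : BddBelow S := by
    obtain ⟨m, hm⟩ := (Set.finite_range x).bddBelow
    refine ⟨m, fun z hz => ?_⟩
    have hpos : 0 < empCount x z := by
      exact_mod_cast (mul_pos hq.1 hn').trans_le hz
    obtain ⟨i, hi⟩ := card_pos.1 hpos
    exact (hm ⟨i, rfl⟩).trans (mem_filter.1 hi).2
  rw [empQuantile, hS]
  refine ⟨fun h => ?_, fun h => csInf_le hbdd h⟩
  exact (hclosed.csInf_mem hne hbdd).trans (by exact_mod_cast empCount_mono x h)

theorem measurable_empQuantile (hn : 0 < n) (hq : q ∈ Set.Ioc (0 : ℝ) 1) :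
    Measurable fun x : Fin n → ℝ => empQuantile x q := by
  refine measurable_of_Iic fun t => ?_
  have h : (fun x : Fin n → ℝ => empQuantile x q) ⁻¹' Set.Iic t =
      (fun x => (empCount x t : ℝ)) ⁻¹' Set.Ici (q * n) := by
    ext x
    exact empQuantile_le_iff hn hq x t
  rw [h]
  exact measurable_empCount t measurableSet_Ici

theorem le_empQuantile_of_card_lt (hn : 0 < n) (hq : q ∈ Set.Ioc (0 : ℝ) 1) (x : Fin n → ℝ)
    {v : ℝ} (h : #{i | x i < v} < ⌈(n : ℝ) * q⌉₊) : v ≤ empQuantile x q := by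
  by_contra! hlt
  have hk : ⌈(n : ℝ) * q⌉₊ ≤ empCount x (empQuantile x q) := by
    rw [Nat.ceil_le, mul_comm]
    exact (empQuantile_le_iff hn hq x _).1 le_rfl
  have hsub : empCount x (empQuantile x q) ≤ #{i | x i < v} :=
    card_le_card (monotone_filter_right _ fun _ _ hi => hi.trans_lt hlt)
  omega

theorem le_card_filter_le_empQuantile_succAbove (hn : 0 < n) (hq : q ∈ Set.Ioc (0 : ℝ) 1)
    (w : Fin (n + 1) → ℝ) :
    ⌈(n : ℝ) * q⌉₊ ≤ #{j | w j ≤ empQuantile (fun i => w (j.succAbove i)) q} := by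
  have hk : ⌈(n : ℝ) * q⌉₊ ≤ Fintype.card (Fin (n + 1)) := by
    rw [Fintype.card_fin, Nat.ceil_le]
    push_cast
    nlinarith [hq.2]
  refine (le_card_filter_strictRank_lt w hk).trans (card_le_card ?_)
  refine monotone_filter_right _ fun j _ hj => le_empQuantile_of_card_lt hn hq _ ?_
  refine lt_of_le_of_lt ?_ hj
  refine card_le_card_of_injOn j.succAbove (fun i hi => ?_) Fin.succAbove_right_injective.injOn
  simp only [coe_filter, mem_univ, true_and, Set.mem_ofPred_eq] at hi ⊢
  exact hi

end empQuantile

open Classical in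
theorem lintegral_card_filter_mem_piFinSuccAbove {α : Type*} [MeasurableSpace α]
    (μ : Measure α) [SigmaFinite μ] {n : ℕ} {B : Set (α × (Fin n → α))} (hB : MeasurableSet B) :
    ∫⁻ w, (#{j | (w j, fun i => w (j.succAbove i)) ∈ B} : ℝ≥0∞)
        ∂Measure.pi (fun _ : Fin (n + 1) => μ) =
      (n + 1) * μ.prod (Measure.pi fun _ => μ) B := by
  set e := fun j => MeasurableEquiv.piFinSuccAbove (fun _ : Fin (n + 1) => α) j
  calc ∫⁻ w, (#{j | (w j, fun i => w (j.succAbove i)) ∈ B} : ℝ≥0∞)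
        ∂Measure.pi (fun _ : Fin (n + 1) => μ)
      = ∫⁻ w, ∑ j, (e j ⁻¹' B).indicator 1 w ∂Measure.pi (fun _ : Fin (n + 1) => μ) := by
        refine lintegral_congr fun w => ?_
        rw [natCast_card_filter]
        rfl
    _ = ∑ j, Measure.pi (fun _ : Fin (n + 1) => μ) (e j ⁻¹' B) := by
        rw [lintegral_finsetSum _ fun j _ => measurable_one.indicator ((e j).measurable hB)]
        simp_rw [lintegral_indicator_one ((e _).measurable hB)]
    _ = (n + 1) * μ.prod (Measure.pi fun _ => μ) B := by
        simp_rw [e, (measurePreserving_piFinSuccAbove (fun _ => μ) _).measure_preimage_equiv]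
        simp

section cdf

variable (μ : Measure ℝ) [IsProbabilityMeasure μ] {n : ℕ} {q : ℝ}

theorem ceil_mul_le_lintegral_measure_Iic_empQuantile (hn : 0 < n)
    (hq : q ∈ Set.Ioc (0 : ℝ) 1) :
    (⌈(n : ℝ) * q⌉₊ : ℝ≥0∞) ≤
      (n + 1) * ∫⁻ x, μ (Set.Iic (empQuantile x q)) ∂Measure.pi (fun _ : Fin n => μ) := by
  set B := {p : ℝ × (Fin n → ℝ) | p.1 ≤ empQuantile p.2 q}
  have hB : MeasurableSet B :=
    measurableSet_le measurable_fst ((measurable_empQuantile hn hq).comp measurable_snd)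
  have hprod : μ.prod (Measure.pi fun _ => μ) B =
      ∫⁻ x, μ (Set.Iic (empQuantile x q)) ∂Measure.pi (fun _ : Fin n => μ) :=
    Measure.prod_apply_symm hB
  rw [← hprod, ← lintegral_card_filter_mem_piFinSuccAbove μ hB]
  calc (⌈(n : ℝ) * q⌉₊ : ℝ≥0∞)
      = ∫⁻ _, (⌈(n : ℝ) * q⌉₊ : ℝ≥0∞) ∂Measure.pi (fun _ : Fin (n + 1) => μ) := by simp
    _ ≤ _ := lintegral_mono fun w => by
        -- the two filters differ only in their `Decidable` instances
        exact Nat.cast_le.2 ((le_card_filter_le_empQuantile_succAbove hn hq w).trans_eq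
          (by congr! 2))

theorem ceil_mul_div_le_integral_cdf_empQuantile (hn : 0 < n) (hq : q ∈ Set.Ioc (0 : ℝ) 1) :
    (⌈(n : ℝ) * q⌉₊ : ℝ) / (n + 1) ≤
      ∫ x, cdf μ (empQuantile x q) ∂Measure.pi (fun _ : Fin n => μ) := by
  set I := ∫⁻ x, μ (Set.Iic (empQuantile x q)) ∂Measure.pi (fun _ : Fin n => μ)
  have hmeas : Measurable fun z : ℝ => μ (Set.Iic z) :=
    Monotone.measurable fun _ _ h => measure_mono (Set.Iic_subset_Iic.2 h)
  have hI : I ≠ ∞ := by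
    refine ne_top_of_le_ne_top ENNReal.one_ne_top ?_
    calc I ≤ ∫⁻ _, 1 ∂Measure.pi (fun _ : Fin n => μ) := lintegral_mono fun _ => prob_le_one
      _ = 1 := by simp
  have hint : ∫ x, cdf μ (empQuantile x q) ∂Measure.pi (fun _ : Fin n => μ) = I.toReal := by
    simp_rw [cdf_eq_real, measureReal_def]
    exact integral_toReal (hmeas.comp (measurable_empQuantile hn hq)).aemeasurable
      (ae_of_all _ fun _ => measure_lt_top _ _)
  have h := ENNReal.toReal_mono (ENNReal.mul_ne_top (by simp) hI)
    (ceil_mul_le_lintegral_measure_Iic_empQuantile μ hn hq)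
  rw [hint, div_le_iff₀' (by positivity)]
  simpa [ENNReal.toReal_mul, ENNReal.toReal_add] using h

end cdf

theorem expected_cdf_empQuantile_ge_general
    {Ω : Type*} [MeasurableSpace Ω] (P : Measure Ω) [IsProbabilityMeasure P]
    (n : ℕ) (hn : 1 ≤ n)
    (Z : Fin n → Ω → ℝ)
    (hiid : iIndepFun Z P)
    (hident : ∀ i j, IdentDistrib (Z i) (Z j) P P)
    (F : ℝ → ℝ) (hF : ∀ z, F z = (P {ω | Z ⟨0, hn⟩ ω ≤ z}).toReal)
    (q : ℝ) (hq : q ∈ Set.Ioc (0 : ℝ) 1) :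
    (⌈(n : ℝ) * q⌉₊ : ℝ) / ((n : ℝ) + 1) ≤
      ∫ ω, F (empQuantile (fun i => Z i ω) q) ∂P := by
  set μ := P.map (Z ⟨0, hn⟩)
  have hZ : ∀ i, AEMeasurable (Z i) P := fun i => (hident i i).aemeasurable_fst
  have hμ : IsProbabilityMeasure μ := Measure.isProbabilityMeasure_map (hZ _)
  have hFμ : F = cdf μ := funext fun z => by
    rw [hF, cdf_eq_real, measureReal_def,
      Measure.map_apply_of_aemeasurable (hZ _) measurableSet_Iic]
    rfl
  have hlaw : P.map (fun ω i => Z i ω) = Measure.pi fun _ => μ := by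
    rw [hiid.map_fun_eq_pi_map hZ]
    congr with i : 1
    exact (hident i _).map_eq
  calc (⌈(n : ℝ) * q⌉₊ : ℝ) / ((n : ℝ) + 1)
      ≤ ∫ x, cdf μ (empQuantile x q) ∂Measure.pi (fun _ : Fin n => μ) :=
        ceil_mul_div_le_integral_cdf_empQuantile μ hn hq
    _ = ∫ ω, F (empQuantile (fun i => Z i ω) q) ∂P := by
        rw [← hlaw, integral_map (f := fun x => cdf μ (empQuantile x q))
          (aemeasurable_pi_lambda _ hZ)
          ((cdf μ).mono.measurable.comp (measurable_empQuantile hn hq)).aestronglyMeasurable, hFμ]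

/-- **Lower bound on the expected plug-in CDF value at the empirical quantile** of
i.i.d. finitely supported samples: `E[F(F̂⁻¹(q))] ≥ ⌈nq⌉/(n+1)`. -/
theorem expected_cdf_empQuantile_ge
    {Ω ι : Type*} [MeasurableSpace Ω] (P : Measure Ω) [IsProbabilityMeasure P]
    [Fintype ι] [Nonempty ι]
    (a : ι → ℝ)
    (n : ℕ) (hn : 1 ≤ n)
    (Z : Fin n → Ω → ℝ) (hmeas : ∀ i, Measurable (Z i))
    (hiid : iIndepFun Z P)
    (hident : ∀ i j, IdentDistrib (Z i) (Z j) P P)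
    (hsupp : ∀ i ω, Z i ω ∈ Set.range a)
    (F : ℝ → ℝ) (hF : ∀ z, F z = (P {ω | Z ⟨0, hn⟩ ω ≤ z}).toReal)
    (q : ℝ) (hq : q ∈ Set.Ioc (0 : ℝ) 1) :
    (⌈(n : ℝ) * q⌉₊ : ℝ) / ((n : ℝ) + 1) ≤
      ∫ ω, F (empQuantile (fun i => Z i ω) q) ∂P :=
  expected_cdf_empQuantile_ge_general P n hn Z hiid hident F hF q hq
end
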